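/- arXiv:2102.05019 — 7 statements merged into one kernel-verified Lean document; each statement's English description precedes it below -/
import Mathlib

section
/- Let S be an unsatisfiable system of integer-linear inequalities in n real variables. If S has a Cutting Planes refutation with s inequalities, then S has a pathlike Stabbing Planes refutation with at most s queries. -/
/-- An integer-linear inequality `a · x ≥ b` in `n` variables. -/
structure LinIneq (n : ℕ) where
  a : Fin n → ℤ
  b : ℤ

/-- The real inner product of an integer vector with a real point. -/
def dotIR {n : ℕ} (a : Fin n → ℤ) (x : Fin n → ℝ) : ℝ := ∑ i, (a i : ℝ) * x i

/-- A real point satisfies the inequality `a · x ≥ b`. -/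
def LinIneq.sat {n : ℕ} (L : LinIneq n) (x : Fin n → ℝ) : Prop := dotIR L.a x ≥ (L.b : ℝ)

/-- The set of real points satisfying every inequality of the system `S`. -/
def polytopeOf {n : ℕ} (S : Set (LinIneq n)) : Set (Fin n → ℝ) := {x | ∀ L ∈ S, L.sat x}

/-- The halfspace `a · x ≤ b - 1`. -/
def leSet {n : ℕ} (a : Fin n → ℤ) (b : ℤ) : Set (Fin n → ℝ) := {x | dotIR a x ≤ (b : ℝ) - 1}

/-- The halfspace `a · x ≥ b`. -/
def geSet {n : ℕ} (a : Fin n → ℤ) (b : ℤ) : Set (Fin n → ℝ) := {x | dotIR a x ≥ (b : ℝ)}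

/-- A Stabbing Planes proof tree: internal nodes carry queries `(a, b)`. -/
inductive SPTree (n : ℕ) where
  | leaf : SPTree n
  | node (a : Fin n → ℤ) (b : ℤ) (l r : SPTree n) : SPTree n

namespace SPTree

variable {n : ℕ}

/-- The number of queries (internal nodes). -/
def size : SPTree n → ℕ
  | .leaf => 0
  | .node _ _ l r => l.size + r.size + 1

/-- The depth of the tree. -/
def depth : SPTree n → ℕ
  | .leaf => 0
  | .node _ _ l r => max l.depth r.depth + 1

/-- The tree is a valid SP refutation of the polytope `P`: at each query the left
child refutes `P ∩ {a·x ≤ b-1}` and the right child refutes `P ∩ {a·x ≥ b}`, and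
the polytope associated with every leaf is empty. -/
def valid : SPTree n → Set (Fin n → ℝ) → Prop
  | .leaf, P => P = ∅
  | .node a b l r, P => l.valid (P ∩ leSet a b) ∧ r.valid (P ∩ geSet a b)

/-- Every query of the tree is pathlike for the polytope at its node. -/
def pathlike : SPTree n → Set (Fin n → ℝ) → Prop
  | .leaf, _ => True
  | .node a b l r, P =>
      (P ∩ leSet a b = ∅ ∨ P ∩ geSet a b = ∅) ∧
      l.pathlike (P ∩ leSet a b) ∧ r.pathlike (P ∩ geSet a b)

end SPTree

/-- `Q` is a face of `P`: `Q = P ∩ {x : a·x = β}` where `a·x ≤ β` holds on all of `P`. -/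
def IsFace {n : ℕ} (P Q : Set (Fin n → ℝ)) : Prop :=
  ∃ (a : Fin n → ℝ) (β : ℝ), (∀ x ∈ P, (∑ i, a i * x i) ≤ β) ∧
    Q = P ∩ {x | (∑ i, a i * x i) = β}

namespace SPTree

variable {n : ℕ}

/-- Every query of the tree is facelike for the polytope at its node. -/
def facelike : SPTree n → Set (Fin n → ℝ) → Prop
  | .leaf, _ => True
  | .node a b l r, P =>
      (P ∩ leSet a b = ∅ ∨ IsFace P (P ∩ leSet a b) ∨
        P ∩ geSet a b = ∅ ∨ IsFace P (P ∩ geSet a b)) ∧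
      l.facelike (P ∩ leSet a b) ∧ r.facelike (P ∩ geSet a b)

/-- All coefficients of all query vectors are bounded by `c` in absolute value. -/
def coeffBound : SPTree n → ℤ → Prop
  | .leaf, _ => True
  | .node a _ l r, c => (∀ i, |a i| ≤ c) ∧ l.coeffBound c ∧ r.coeffBound c

end SPTree

/-- A Cutting Planes refutation of the system `S`: a sequence of integer-linear
inequalities, each an axiom of `S`, a nonnegative integer linear combination of two
earlier ones, or obtained from an earlier one by the division rule; the sequence
ends with `0 ≥ 1`. -/
def IsCPRefutation {n : ℕ} (S : Set (LinIneq n)) (π : List (LinIneq n)) : Prop :=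
  π.getLast? = some ⟨fun _ => 0, 1⟩ ∧
  ∀ i : Fin π.length,
    π.get i ∈ S ∨
    (∃ j k : Fin π.length, (j : ℕ) < (i : ℕ) ∧ (k : ℕ) < (i : ℕ) ∧
      ∃ α β : ℤ, 0 ≤ α ∧ 0 ≤ β ∧
        (∀ t, (π.get i).a t = α * (π.get j).a t + β * (π.get k).a t) ∧
        (π.get i).b = α * (π.get j).b + β * (π.get k).b) ∨
    (∃ j : Fin π.length, (j : ℕ) < (i : ℕ) ∧
      ∃ d : ℤ, 0 < d ∧ (∀ t, (π.get j).a t = d * (π.get i).a t) ∧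
        (π.get i).b = ⌈((π.get j).b : ℚ) / (d : ℚ)⌉)

/-!
A Cutting Planes line is implied, up to an error smaller than one, by the lines before it:
on a real point satisfying the earlier lines a nonnegative combination keeps `a · x ≥ b`, and
the division rule still gives `a · x ≥ b' / d > ⌈b' / d⌉ - 1`. Hence querying the lines of the
refutation in order, every branch `a · x ≤ b - 1` is empty, and the branch along
`a · x ≥ b` ends in the empty polytope cut out by `0 ≥ 1`.
-/

section Soundness

variable {n : ℕ}

lemma dotIR_of_eq_lincomb {a a₁ a₂ : Fin n → ℤ} {α β : ℤ}
    (h : ∀ t, a t = α * a₁ t + β * a₂ t) (x : Fin n → ℝ) :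
    dotIR a x = α * dotIR a₁ x + β * dotIR a₂ x := by
  simp only [dotIR, Finset.mul_sum, ← Finset.sum_add_distrib, h]
  refine Finset.sum_congr rfl fun t _ => ?_
  push_cast
  ring

lemma LinIneq.sat_of_lincomb {L L₁ L₂ : LinIneq n} {α β : ℤ} {x : Fin n → ℝ}
    (h₁ : L₁.sat x) (h₂ : L₂.sat x) (hα : 0 ≤ α) (hβ : 0 ≤ β)
    (ha : ∀ t, L.a t = α * L₁.a t + β * L₂.a t) (hb : L.b = α * L₁.b + β * L₂.b) :
    L.sat x := by
  have hα' : (0 : ℝ) ≤ α := by exact_mod_cast hα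
  have hβ' : (0 : ℝ) ≤ β := by exact_mod_cast hβ
  unfold LinIneq.sat at *
  rw [dotIR_of_eq_lincomb ha, hb]
  push_cast
  nlinarith

lemma LinIneq.sub_one_lt_of_div {L L' : LinIneq n} {d : ℤ} {x : Fin n → ℝ}
    (h : L'.sat x) (hd : 0 < d) (ha : ∀ t, L'.a t = d * L.a t)
    (hb : L.b = ⌈(L'.b : ℚ) / d⌉) :
    (L.b : ℝ) - 1 < dotIR L.a x := by
  have hd' : (0 : ℝ) < d := by exact_mod_cast hd
  have hscale : dotIR L'.a x = d * dotIR L.a x := by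
    simpa using dotIR_of_eq_lincomb (a := L'.a) (a₁ := L.a) (α := d) (β := 0) (a₂ := L.a)
      (fun t => by rw [ha t]; ring) x
  have hquot : (L'.b : ℝ) / d ≤ dotIR L.a x := by
    rw [div_le_iff₀ hd']
    unfold LinIneq.sat at h
    linarith
  have hceil : (L.b : ℝ) < (L'.b : ℝ) / d + 1 := by
    have : ((L.b : ℚ) : ℝ) < (((L'.b : ℚ) / d + 1 : ℚ) : ℝ) := by
      exact_mod_cast hb ▸ Int.ceil_lt_add_one _
    push_cast at this
    exact this
  linarith

end Soundness

namespace IsCPRefutation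

variable {n : ℕ} {S : Set (LinIneq n)} {π : List (LinIneq n)}

lemma sub_one_lt_dotIR (hπ : IsCPRefutation S π) (i : Fin π.length) {x : Fin n → ℝ}
    (hx : x ∈ polytopeOf S) (hprev : ∀ j : Fin π.length, j < i → (π.get j).sat x) :
    ((π.get i).b : ℝ) - 1 < dotIR (π.get i).a x := by
  rcases hπ.2 i with hS | ⟨j, k, hj, hk, α, β, hα, hβ, ha, hb⟩ | ⟨j, hj, d, hd, ha, hb⟩
  · have : (π.get i).sat x := hx _ hS
    unfold LinIneq.sat at this
    linarith
  · have : (π.get i).sat x := LinIneq.sat_of_lincomb (hprev j hj) (hprev k hk) hα hβ ha hb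
    unfold LinIneq.sat at this
    linarith
  · exact LinIneq.sub_one_lt_of_div (hprev j hj) hd ha hb

lemma exists_not_sat (hπ : IsCPRefutation S π) (x : Fin n → ℝ) :
    ∃ L ∈ π, ¬ L.sat x :=
  ⟨_, List.mem_of_getLast? hπ.1, by simp [LinIneq.sat, dotIR]⟩

end IsCPRefutation

namespace SPTree

variable {n : ℕ}

def chain : List (LinIneq n) → SPTree n
  | [] => .leaf
  | L :: rest => .node L.a L.b .leaf (chain rest)

lemma size_chain (l : List (LinIneq n)) : (chain l).size = l.length := by
  induction l with
  | nil => rfl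
  | cons L rest ih => simp [chain, size, ih]

lemma valid_chain (l : List (LinIneq n)) {P : Set (Fin n → ℝ)}
    (hnear : ∀ (i : Fin l.length), ∀ x ∈ P, (∀ j : Fin l.length, j < i → (l.get j).sat x) →
      ((l.get i).b : ℝ) - 1 < dotIR (l.get i).a x)
    (hrefute : ∀ x ∈ P, ∃ L ∈ l, ¬ L.sat x) :
    (chain l).valid P := by
  induction l generalizing P with
  | nil =>
    refine Set.eq_empty_of_forall_notMem fun x hx => ?_
    simpa using hrefute x hx
  | cons L rest ih =>
    refine ⟨Set.eq_empty_of_forall_notMem fun x ⟨hx, hle⟩ => ?_, ih ?_ ?_⟩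
    · have := hnear ⟨0, by simp⟩ x hx fun j hj => absurd hj (Fin.not_lt_zero _)
      exact (lt_irrefl _) (this.trans_le hle)
    · rintro i x ⟨hx, hL⟩ hprev
      refine hnear i.succ x hx fun ⟨j, hj⟩ hji => ?_
      rcases j with _ | j
      · exact hL
      · exact hprev ⟨j, Nat.lt_of_succ_lt_succ hj⟩ (Nat.lt_of_succ_lt_succ hji)
    · rintro x ⟨hx, hL⟩
      obtain ⟨L', hL', hnot⟩ := hrefute x hx
      rcases List.mem_cons.1 hL' with rfl | hrest
      · exact absurd hL hnot
      · exact ⟨L', hrest, hnot⟩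

lemma pathlike_chain_of_valid :
    ∀ (l : List (LinIneq n)) (P : Set (Fin n → ℝ)), (chain l).valid P → (chain l).pathlike P
  | [], _, _ => trivial
  | _ :: rest, _, h => ⟨Or.inl h.1, trivial, pathlike_chain_of_valid rest _ h.2⟩

end SPTree

theorem cp_to_pathlike_sp_general {n : ℕ} (S : Set (LinIneq n))
    (π : List (LinIneq n)) (hπ : IsCPRefutation S π) :
    ∃ T : SPTree n, T.valid (polytopeOf S) ∧ T.pathlike (polytopeOf S) ∧
      T.size ≤ π.length := by
  have hvalid : (SPTree.chain π).valid (polytopeOf S) :=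
    SPTree.valid_chain π (fun i _ hx hprev => IsCPRefutation.sub_one_lt_dotIR hπ i hx hprev)
      fun x _ => IsCPRefutation.exists_not_sat hπ x
  exact ⟨SPTree.chain π, hvalid, SPTree.pathlike_chain_of_valid π _ hvalid,
    (SPTree.size_chain π).le⟩

/-- If an unsatisfiable system `S` of integer-linear inequalities in
`n` real variables has a Cutting Planes refutation with `s` inequalities, then `S` has
a pathlike Stabbing Planes refutation with at most `s` queries. -/
theorem cp_to_pathlike_sp {n : ℕ} (S : Set (LinIneq n)) (hfin : S.Finite)
    (hunsat : ¬ ∃ x : Fin n → ℤ, ∀ L ∈ S, L.sat fun i => (x i : ℝ))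
    (π : List (LinIneq n)) (hπ : IsCPRefutation S π) :
    ∃ T : SPTree n, T.valid (polytopeOf S) ∧ T.pathlike (polytopeOf S) ∧
      T.size ≤ π.length :=
  cp_to_pathlike_sp_general S π hπ
end

section
/- Let S be an unsatisfiable system of integer-linear inequalities in n real variables. If S has a facelike Stabbing Planes refutation with s queries, then S has a pathlike Stabbing Planes refutation with at most s queries. -/
/-! ### Auxiliary develoment: Farkas' lemma and geometric lemmas -/

open Finset

theorem farkasLemma : ∀ (n : ℕ) (ι : Type) [Fintype ι] (A : ι → Fin n → ℝ) (c : ι → ℝ),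
    (¬ ∃ x : Fin n → ℝ, ∀ i, c i ≤ ∑ t, A i t * x t) →
    ∃ y : ι → ℝ, (∀ i, 0 ≤ y i) ∧ (∀ t, ∑ i, y i * A i t = 0) ∧ 0 < ∑ i, y i * c i := by
  intro n
  induction n with
  | zero =>
    intro ι _ A c h
    push_neg at h
    obtain ⟨i₀, hi₀⟩ := h (fun _ => 0)
    classical
    refine ⟨fun i => if i = i₀ then 1 else 0, ?_, ?_, ?_⟩
    · intro i; simp only []; split <;> norm_num
    · intro t; exact absurd t.2 (by omega)
    · have : ∑ i : ι, (if i = i₀ then (1:ℝ) else 0) * c i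
          = ∑ i : ι, (if i = i₀ then c i else 0) := by
        apply Finset.sum_congr rfl; intro i _; split <;> simp
      simp only [this, Finset.sum_ite_eq' Finset.univ i₀ c, Finset.mem_univ, if_true]
      have := hi₀; simpa using this
  | succ n ih =>
    intro ι _ A c h
    classical
    set p : ι → ℝ := fun i => A i (Fin.last n) with hp
    set B : ι → Fin n → ℝ := fun i t => A i t.castSucc with hB
    set s : (Fin n → ℝ) → ι → ℝ := fun x' i => ∑ t, B i t * x' t with hs
    let ι' : Type := {i : ι // p i = 0} ⊕ ({i : ι // 0 < p i} × {j : ι // p j < 0})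
    let A' : ι' → Fin n → ℝ := fun k =>
      Sum.elim (fun i => B i.1)
        (fun z => fun t => (-p z.2.1) * B z.1.1 t + p z.1.1 * B z.2.1 t) k
    let c' : ι' → ℝ := fun k =>
      Sum.elim (fun i => c i.1) (fun z => (-p z.2.1) * c z.1.1 + p z.1.1 * c z.2.1) k
    have hsnoc : ∀ (i : ι) (x' : Fin n → ℝ) (v : ℝ),
        ∑ t, A i t * (Fin.snoc x' v : Fin (n+1) → ℝ) t = s x' i + p i * v := by
      intro i x' v
      rw [Fin.sum_univ_castSucc]
      simp [hs, hB, hp]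
    -- the reduced system is infeasible
    have h' : ¬ ∃ x' : Fin n → ℝ, ∀ k, c' k ≤ ∑ t, A' k t * x' t := by
      rintro ⟨x', hx'⟩
      have hzero : ∀ i : {i : ι // p i = 0}, c i.1 ≤ s x' i.1 := fun i => by
        simpa [A', c', hs] using hx' (Sum.inl i)
      have hpair : ∀ (i : {i : ι // 0 < p i}) (j : {j : ι // p j < 0}),
          (-p j.1) * c i.1 + p i.1 * c j.1 ≤ (-p j.1) * s x' i.1 + p i.1 * s x' j.1 := by
        intro i j
        have := hx' (Sum.inr (i, j))
        simpa [A', c', hs, add_mul, mul_assoc, Finset.sum_add_distrib,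
          ← Finset.mul_sum] using this
      have hlu : ∀ (i : {i : ι // 0 < p i}) (j : {j : ι // p j < 0}),
          (c i.1 - s x' i.1) / p i.1 ≤ (c j.1 - s x' j.1) / p j.1 := by
        intro i j
        have h1 : (c i.1 - s x' i.1) / p i.1 * p i.1 = c i.1 - s x' i.1 :=
          div_mul_cancel₀ _ (ne_of_gt i.2)
        have h2 : (c j.1 - s x' j.1) / p j.1 * p j.1 = c j.1 - s x' j.1 :=
          div_mul_cancel₀ _ (ne_of_lt j.2)
        nlinarith [hpair i j, h1, h2, i.2, j.2, mul_pos i.2 (neg_pos.mpr j.2)]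
      have hv : ∃ v : ℝ, (∀ i : {i : ι // 0 < p i}, (c i.1 - s x' i.1) / p i.1 ≤ v) ∧
          (∀ j : {j : ι // p j < 0}, v ≤ (c j.1 - s x' j.1) / p j.1) := by
        by_cases hpos : Nonempty {i : ι // 0 < p i}
        · have hne : (Finset.univ : Finset {i : ι // 0 < p i}).Nonempty :=
            @Finset.univ_nonempty _ _ hpos
          refine ⟨Finset.univ.sup' hne (fun i => (c i.1 - s x' i.1) / p i.1), ?_, ?_⟩
          · intro i
            exact Finset.le_sup'
              (f := fun i : {i : ι // 0 < p i} => (c i.1 - s x' i.1) / p i.1)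
              (Finset.mem_univ i)
          · intro j; exact Finset.sup'_le hne _ (fun i _ => hlu i j)
        · by_cases hneg : Nonempty {j : ι // p j < 0}
          · have hne : (Finset.univ : Finset {j : ι // p j < 0}).Nonempty :=
              @Finset.univ_nonempty _ _ hneg
            refine ⟨Finset.univ.inf' hne (fun j => (c j.1 - s x' j.1) / p j.1), ?_, ?_⟩
            · intro i; exact absurd ⟨i⟩ hpos
            · intro j
              exact Finset.inf'_le
                (f := fun j : {j : ι // p j < 0} => (c j.1 - s x' j.1) / p j.1)
                (Finset.mem_univ j)
          · exact ⟨0, fun i => absurd ⟨i⟩ hpos, fun j => absurd ⟨j⟩ hneg⟩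
      obtain ⟨v, hvl, hvu⟩ := hv
      apply h
      refine ⟨Fin.snoc x' v, fun i => ?_⟩
      rw [hsnoc]
      rcases lt_trichotomy (p i) 0 with hpi | hpi | hpi
      · have := hvu ⟨i, hpi⟩
        rw [le_div_iff_of_neg hpi] at this
        nlinarith [this]
      · have := hzero ⟨i, hpi⟩
        rw [hpi]; linarith
      · have := hvl ⟨i, hpi⟩
        rw [div_le_iff₀ hpi] at this
        nlinarith [this]
    obtain ⟨y', hy'nn, hy'A, hy'c⟩ := ih ι' A' c' h'
    -- pull back the multipliers
    let y : ι → ℝ := fun i =>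
      if h0 : p i = 0 then y' (Sum.inl ⟨i, h0⟩)
      else if hpos : 0 < p i then
        ∑ j : {j : ι // p j < 0}, (-p j.1) * y' (Sum.inr (⟨i, hpos⟩, j))
      else
        ∑ i' : {i' : ι // 0 < p i'},
          p i'.1 * y' (Sum.inr (i', ⟨i, (not_lt.mp hpos).lt_of_ne h0⟩))
    have split3 : ∀ f : ι → ℝ, ∑ i : ι, f i =
        (∑ i : {i : ι // p i = 0}, f i.1 + ∑ i : {i : ι // 0 < p i}, f i.1)
          + ∑ i : {i : ι // p i < 0}, f i.1 := by
      intro f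
      rw [← Finset.sum_filter_add_sum_filter_not Finset.univ (fun i => p i = 0) f]
      rw [← Finset.sum_filter_add_sum_filter_not
        (Finset.univ.filter (fun i => ¬ p i = 0)) (fun i => 0 < p i) f]
      rw [← add_assoc]
      congr 1
      congr 1
      · exact Finset.sum_subtype _ (by simp) f
      · rw [Finset.filter_filter]
        refine Finset.sum_subtype _ ?_ f
        intro i; simp only [Finset.mem_filter, Finset.mem_univ, true_and]
        constructor
        · exact fun hh => hh.2
        · exact fun hh => ⟨ne_of_gt hh, hh⟩
      · rw [Finset.filter_filter]
        refine Finset.sum_subtype _ ?_ f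
        intro i; simp only [Finset.mem_filter, Finset.mem_univ, true_and]
        constructor
        · intro hh; exact (not_lt.mp hh.2).lt_of_ne hh.1
        · intro hh; exact ⟨ne_of_lt hh, not_lt.mpr (le_of_lt hh)⟩
    -- key decomposition identity
    have key : ∀ g : ι → ℝ, ∑ i : ι, y i * g i =
        ∑ k : ι', y' k *
          (Sum.elim (fun i => g i.1)
            (fun z => (-p z.2.1) * g z.1.1 + p z.1.1 * g z.2.1) k) := by
      intro g
      rw [split3 (fun i => y i * g i), Fintype.sum_sum_type, Fintype.sum_prod_type]
      have e0 : ∀ i : {i : ι // p i = 0}, y i.1 * g i.1 = y' (Sum.inl i) * g i.1 := by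
        intro i; simp only [y, dif_pos i.2]
      have e1 : ∀ i : {i : ι // 0 < p i}, y i.1 * g i.1
          = ∑ j : {j : ι // p j < 0}, y' (Sum.inr (i, j)) * ((-p j.1) * g i.1) := by
        intro i
        simp only [y, dif_neg (ne_of_gt i.2), dif_pos i.2, Finset.sum_mul]
        apply Finset.sum_congr rfl; intro j _; ring
      have e2 : ∀ j : {j : ι // p j < 0}, y j.1 * g j.1
          = ∑ i : {i : ι // 0 < p i}, y' (Sum.inr (i, j)) * (p i.1 * g j.1) := by
        intro j
        simp only [y, dif_neg (ne_of_lt j.2), dif_neg (not_lt.mpr (le_of_lt j.2)),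
          Finset.sum_mul]
        apply Finset.sum_congr rfl; intro i _; ring
      rw [Finset.sum_congr rfl (fun i _ => e0 i), Finset.sum_congr rfl (fun i _ => e1 i),
        Finset.sum_congr rfl (fun j _ => e2 j)]
      have hswap : (∑ j : {j : ι // p j < 0}, ∑ i : {i : ι // 0 < p i},
            y' (Sum.inr (i, j)) * (p i.1 * g j.1))
          = ∑ i : {i : ι // 0 < p i}, ∑ j : {j : ι // p j < 0},
            y' (Sum.inr (i, j)) * (p i.1 * g j.1) := Finset.sum_comm
      rw [hswap, add_assoc, ← Finset.sum_add_distrib]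
      congr 1
      apply Finset.sum_congr rfl; intro i _
      rw [← Finset.sum_add_distrib]
      apply Finset.sum_congr rfl; intro j _
      simp only [Sum.elim_inr]
      ring
    refine ⟨y, ?_, ?_, ?_⟩
    · intro i
      simp only [y]
      split
      · exact hy'nn _
      split
      · apply Finset.sum_nonneg; intro j _
        exact mul_nonneg (by linarith [j.2]) (hy'nn _)
      · apply Finset.sum_nonneg; intro i' _
        exact mul_nonneg (le_of_lt i'.2) (hy'nn _)
    · intro t
      refine Fin.lastCases ?_ ?_ t
      · refine Eq.trans (key (fun i => A i (Fin.last n))) ?_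
        apply Finset.sum_eq_zero
        intro k _
        rcases k with i | ⟨i, j⟩
        · simp only [Sum.elim_inl]
          have : A i.1 (Fin.last n) = 0 := i.2
          rw [this, mul_zero]
        · simp only [Sum.elim_inr]
          have : (-p j.1) * A i.1 (Fin.last n) + p i.1 * A j.1 (Fin.last n) = 0 := by
            simp only [hp]; ring
          rw [this, mul_zero]
      · intro t'
        refine Eq.trans (key (fun i => A i t'.castSucc)) ?_
        refine Eq.trans ?_ (hy'A t')
        apply Finset.sum_congr rfl
        intro k _
        rcases k with i | ⟨i, j⟩ <;> rfl
    · refine lt_of_lt_of_eq hy'c (Eq.trans ?_ (key c).symm)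
      apply Finset.sum_congr rfl
      intro k _
      rcases k with i | ⟨i, j⟩ <;> rfl


section Aux

variable {n : ℕ}

noncomputable local instance : DecidableEq (LinIneq n) := Classical.decEq _

lemma dotIR_neg (a : Fin n → ℤ) (x : Fin n → ℝ) : dotIR (-a) x = - dotIR a x := by
  rw [dotIR, dotIR, ← Finset.sum_neg_distrib]
  apply Finset.sum_congr rfl
  intro t _
  simp only [Pi.neg_apply]
  push_cast
  ring

lemma dotIR_sub_mul (d a : Fin n → ℤ) (m : ℤ) (x : Fin n → ℝ) :
    dotIR (fun t => d t - m * a t) x = dotIR d x - (m : ℝ) * dotIR a x := by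
  rw [dotIR, dotIR, dotIR, Finset.mul_sum, ← Finset.sum_sub_distrib]
  apply Finset.sum_congr rfl
  intro t _
  push_cast
  ring

lemma dotIR_neg_sub_mul (d a : Fin n → ℤ) (m : ℤ) (x : Fin n → ℝ) :
    dotIR (fun t => -(d t) - m * a t) x = - dotIR d x - (m : ℝ) * dotIR a x := by
  rw [dotIR, dotIR, dotIR, Finset.mul_sum, ← Finset.sum_neg_distrib, ← Finset.sum_sub_distrib]
  apply Finset.sum_congr rfl
  intro t _
  push_cast
  ring

lemma polytopeOf_insert (L : LinIneq n) (S : Set (LinIneq n)) :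
    polytopeOf (insert L S) = polytopeOf S ∩ {x | L.sat x} := by
  ext x
  simp only [polytopeOf, Set.mem_inter_iff, Set.mem_setOf_eq, Set.mem_insert_iff]
  constructor
  · intro h; exact ⟨fun M hM => h M (Or.inr hM), h L (Or.inl rfl)⟩
  · rintro ⟨h1, h2⟩ M (rfl | hM)
    · exact h2
    · exact h1 M hM

lemma polytopeOf_insert_ge (a : Fin n → ℤ) (b : ℤ) (S : Set (LinIneq n)) :
    polytopeOf (insert (⟨a, b⟩ : LinIneq n) S) = polytopeOf S ∩ geSet a b := by
  rw [polytopeOf_insert]; rfl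

lemma polytopeOf_insert_le (a : Fin n → ℤ) (b : ℤ) (S : Set (LinIneq n)) :
    polytopeOf (insert (⟨-a, 1 - b⟩ : LinIneq n) S) = polytopeOf S ∩ leSet a b := by
  rw [polytopeOf_insert]
  congr 1
  ext x
  simp only [LinIneq.sat, Set.mem_setOf_eq, leSet, dotIR_neg]
  push_cast
  constructor <;> intro h <;> linarith

lemma geSet_neg (a : Fin n → ℤ) (b : ℤ) : geSet (-a) (1 - b) = leSet a b := by
  ext x
  simp only [geSet, leSet, Set.mem_setOf_eq, dotIR_neg]
  push_cast
  constructor <;> intro h <;> linarith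

lemma leSet_neg (a : Fin n → ℤ) (b : ℤ) : leSet (-a) (1 - b) = geSet a b := by
  ext x
  simp only [geSet, leSet, Set.mem_setOf_eq, dotIR_neg]
  push_cast
  constructor <;> intro h <;> linarith

lemma valid_mono : ∀ (T : SPTree n) (P Q : Set (Fin n → ℝ)), Q ⊆ P → T.valid P → T.valid Q := by
  intro T
  induction T with
  | leaf =>
    intro P Q hsub hv
    exact Set.eq_empty_of_subset_empty (hv ▸ hsub)
  | node a b l r ihl ihr =>
    intro P Q hsub hv
    exact ⟨ihl _ _ (Set.inter_subset_inter_left _ hsub) hv.1,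
      ihr _ _ (Set.inter_subset_inter_left _ hsub) hv.2⟩

lemma pathlike_mono : ∀ (T : SPTree n) (P Q : Set (Fin n → ℝ)), Q ⊆ P →
    T.pathlike P → T.pathlike Q := by
  intro T
  induction T with
  | leaf => intro _ _ _ _; trivial
  | node a b l r ihl ihr =>
    intro P Q hsub hv
    refine ⟨?_, ihl _ _ (Set.inter_subset_inter_left _ hsub) hv.2.1,
      ihr _ _ (Set.inter_subset_inter_left _ hsub) hv.2.2⟩
    rcases hv.1 with h | h
    · exact Or.inl (Set.eq_empty_of_subset_empty
        (h ▸ Set.inter_subset_inter_left _ hsub))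
    · exact Or.inr (Set.eq_empty_of_subset_empty
        (h ▸ Set.inter_subset_inter_left _ hsub))

/-- Convexity of `polytopeOf`. -/
lemma polytopeOf_convex {S : Set (LinIneq n)} {x y : Fin n → ℝ} (hx : x ∈ polytopeOf S)
    (hy : y ∈ polytopeOf S) {t : ℝ} (h0 : 0 ≤ t) (h1 : t ≤ 1) :
    (fun i => (1 - t) * x i + t * y i) ∈ polytopeOf S := by
  intro L hL
  have hx' := hx L hL
  have hy' := hy L hL
  have hdot : dotIR L.a (fun i => (1 - t) * x i + t * y i)
      = (1 - t) * dotIR L.a x + t * dotIR L.a y := by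
    rw [dotIR, dotIR, dotIR, Finset.mul_sum, Finset.mul_sum, ← Finset.sum_add_distrib]
    apply Finset.sum_congr rfl
    intro i _
    ring
  have hx2 : dotIR L.a x ≥ (L.b : ℝ) := hx'
  have hy2 : dotIR L.a y ≥ (L.b : ℝ) := hy'
  show dotIR L.a _ ≥ _
  rw [hdot]
  nlinarith [mul_nonneg (by linarith : (0:ℝ) ≤ 1 - t) (by linarith : (0:ℝ) ≤ dotIR L.a x - (L.b:ℝ)),
    mul_nonneg h0 (by linarith : (0:ℝ) ≤ dotIR L.a y - (L.b:ℝ))]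

/-- Affine evaluation of a real linear functional at a convex combination. -/
lemma sum_affine (c : Fin n → ℝ) (x y : Fin n → ℝ) (t : ℝ) :
    (∑ i, c i * ((1 - t) * x i + t * y i))
      = (1 - t) * (∑ i, c i * x i) + t * (∑ i, c i * y i) := by
  rw [Finset.mul_sum, Finset.mul_sum, ← Finset.sum_add_distrib]
  apply Finset.sum_congr rfl
  intro i _
  ring

/-- If the upper side of a query is a nonempty face of `P` while the lower side is
nonempty, then `a · x ≤ b` holds on all of `P`. -/
lemma faceKey {S : Set (LinIneq n)} {a : Fin n → ℤ} {b : ℤ}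
    (hface : IsFace (polytopeOf S) (polytopeOf S ∩ geSet a b))
    (hne : (polytopeOf S ∩ leSet a b).Nonempty) :
    ∀ x ∈ polytopeOf S, dotIR a x ≤ (b : ℝ) := by
  obtain ⟨c, β, hcle, heq⟩ := hface
  obtain ⟨y₀, hy₀P, hy₀le⟩ := hne
  intro x hxP
  by_contra hgt
  push_neg at hgt
  have hy₀lt : dotIR a y₀ ≤ (b : ℝ) - 1 := hy₀le
  have hD : 0 < dotIR a x - dotIR a y₀ := by linarith
  set t : ℝ := ((b : ℝ) - dotIR a y₀) / (dotIR a x - dotIR a y₀) with ht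
  have ht0 : 0 < t := div_pos (by linarith) hD
  have ht1 : t < 1 := (div_lt_one hD).mpr (by linarith)
  set z : Fin n → ℝ := fun i => (1 - t) * y₀ i + t * x i with hz
  have hzP : z ∈ polytopeOf S := polytopeOf_convex hy₀P hxP (le_of_lt ht0) (le_of_lt ht1)
  have hza : dotIR a z = (b : ℝ) := by
    have : dotIR a z = (1 - t) * dotIR a y₀ + t * dotIR a x := by
      rw [dotIR, dotIR, dotIR, Finset.mul_sum, Finset.mul_sum, ← Finset.sum_add_distrib]
      apply Finset.sum_congr rfl
      intro i _
      simp only [hz]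
      ring
    rw [this, ht]
    field_simp
    ring
  have hzF : z ∈ polytopeOf S ∩ geSet a b := ⟨hzP, le_of_eq hza.symm⟩
  rw [heq] at hzF
  have hzc : (∑ i, c i * z i) = β := hzF.2
  have hcy : (∑ i, c i * y₀ i) ≤ β := hcle y₀ hy₀P
  have hcx : (∑ i, c i * x i) ≤ β := hcle x hxP
  have hcz : (∑ i, c i * z i) = (1 - t) * (∑ i, c i * y₀ i) + t * (∑ i, c i * x i) :=
    sum_affine c y₀ x t
  have hy₀c : (∑ i, c i * y₀ i) = β := by nlinarith
  have hy₀F : y₀ ∈ polytopeOf S ∩ geSet a b := by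
    rw [heq]; exact ⟨hy₀P, hy₀c⟩
  have : dotIR a y₀ ≥ (b : ℝ) := hy₀F.2
  linarith

/-- Soundness of nonnegative combinations. -/
lemma combo_bound (S' : Finset (LinIneq n)) (lam : LinIneq n → ℝ)
    (hlam : ∀ L, 0 ≤ lam L) (x : Fin n → ℝ) (hx : x ∈ polytopeOf (↑S' : Set (LinIneq n))) :
    (∑ L ∈ S', lam L * (L.b : ℝ)) ≤ ∑ L ∈ S', lam L * dotIR L.a x := by
  apply Finset.sum_le_sum
  intro L hL
  exact mul_le_mul_of_nonneg_left (hx L (by exact_mod_cast hL)) (hlam L)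

/-- Evaluating a vanishing combination of rows at a point. -/
lemma eval_combo (ν μ : ℝ) (r₁ r₂ : LinIneq n) (S' : Finset (LinIneq n))
    (lam : LinIneq n → ℝ) (x : Fin n → ℝ)
    (h : ∀ t, ν * (r₁.a t : ℝ) + μ * (r₂.a t : ℝ) + ∑ L ∈ S', lam L * (L.a t : ℝ) = 0) :
    ν * dotIR r₁.a x + μ * dotIR r₂.a x + ∑ L ∈ S', lam L * dotIR L.a x = 0 := by
  have e1 : ∀ (w : Fin n → ℤ) (q : ℝ), q * dotIR w x = ∑ t, (q * (w t : ℝ)) * x t := by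
    intro w q
    rw [dotIR, Finset.mul_sum]
    apply Finset.sum_congr rfl
    intro t _
    ring
  have e2 : (∑ L ∈ S', lam L * dotIR L.a x)
      = ∑ t, (∑ L ∈ S', lam L * (L.a t : ℝ)) * x t := by
    have estep : ∀ L ∈ S', lam L * dotIR L.a x = ∑ t, (lam L * (L.a t : ℝ)) * x t :=
      fun L _ => e1 L.a (lam L)
    rw [Finset.sum_congr rfl estep, Finset.sum_comm]
    apply Finset.sum_congr rfl
    intro t _
    rw [Finset.sum_mul]
  rw [e1, e1, e2, ← Finset.sum_add_distrib, ← Finset.sum_add_distrib]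
  apply Finset.sum_eq_zero
  intro t _
  have h0 := h t
  have hfac : (ν * (r₁.a t:ℝ)) * x t + (μ * (r₂.a t:ℝ)) * x t
      + (∑ L ∈ S', lam L * (L.a t:ℝ)) * x t
      = (ν * (r₁.a t:ℝ) + μ * (r₂.a t:ℝ) + ∑ L ∈ S', lam L * (L.a t:ℝ)) * x t := by ring
  rw [hfac, h0, zero_mul]

/-- Farkas' lemma for a finite integer system with two distinguished extra rows. -/
lemma farkas2 (S' : Finset (LinIneq n)) (r₁ r₂ : LinIneq n)
    (hempty : ∀ x : Fin n → ℝ, ¬(r₁.sat x ∧ r₂.sat x ∧ x ∈ polytopeOf (↑S' : Set (LinIneq n)))) :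
    ∃ (ν μ : ℝ) (lam : LinIneq n → ℝ), 0 ≤ ν ∧ 0 ≤ μ ∧ (∀ L, 0 ≤ lam L) ∧
      (∀ t, ν * (r₁.a t : ℝ) + μ * (r₂.a t : ℝ) + ∑ L ∈ S', lam L * (L.a t : ℝ) = 0) ∧
      0 < ν * (r₁.b : ℝ) + μ * (r₂.b : ℝ) + ∑ L ∈ S', lam L * (L.b : ℝ) := by
  classical
  set ι : Type := Option (Option {L : LinIneq n // L ∈ S'}) with hι
  let row : ι → LinIneq n := fun k =>
    match k with
    | none => r₁
    | some none => r₂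
    | some (some L) => L.1
  let A : ι → Fin n → ℝ := fun k t => ((row k).a t : ℝ)
  let c : ι → ℝ := fun k => ((row k).b : ℝ)
  have hinf : ¬ ∃ x : Fin n → ℝ, ∀ k, c k ≤ ∑ t, A k t * x t := by
    rintro ⟨x, hx⟩
    apply hempty x
    have hsat : ∀ k : ι, (row k).sat x := by
      intro k
      have := hx k
      simpa only [LinIneq.sat, dotIR, ge_iff_le, A, c] using this
    refine ⟨hsat none, hsat (some none), ?_⟩
    intro L hL
    exact hsat (some (some ⟨L, hL⟩))
  obtain ⟨y, hynn, hyA, hyc⟩ := farkasLemma n ι A c hinf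
  refine ⟨y none, y (some none), fun L => if h : L ∈ S' then y (some (some ⟨L, h⟩)) else 0,
    hynn none, hynn (some none), ?_, ?_, ?_⟩
  · intro L
    by_cases h : L ∈ S' <;> simp [h, hynn]
  · intro t
    have h0 := hyA t
    rw [Fintype.sum_option, Fintype.sum_option] at h0
    simp only [A, c, row] at h0
    rw [Finset.sum_subtype S' (fun L => Iff.rfl)
      (fun L => (if h : L ∈ S' then y (some (some ⟨L, h⟩)) else 0) * ((L.a t : ℝ)))]
    have hc : (∑ L : {L : LinIneq n // L ∈ S'},
          (if h : L.1 ∈ S' then y (some (some ⟨L.1, h⟩)) else 0) * ((L.1.a t : ℝ)))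
        = ∑ L : {L : LinIneq n // L ∈ S'}, y (some (some L)) * ((L.1.a t : ℝ)) := by
      apply Finset.sum_congr rfl
      intro L _
      rw [dif_pos L.2]
    rw [hc]
    linarith [h0]
  · have h0 := hyc
    rw [Fintype.sum_option, Fintype.sum_option] at h0
    simp only [A, c, row] at h0
    rw [Finset.sum_subtype S' (fun L => Iff.rfl)
      (fun L => (if h : L ∈ S' then y (some (some ⟨L, h⟩)) else 0) * ((L.b : ℝ)))]
    have hc : (∑ L : {L : LinIneq n // L ∈ S'},
          (if h : L.1 ∈ S' then y (some (some ⟨L.1, h⟩)) else 0) * ((L.1.b : ℝ)))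
        = ∑ L : {L : LinIneq n // L ∈ S'}, y (some (some L)) * ((L.1.b : ℝ)) := by
      apply Finset.sum_congr rfl
      intro L _
      rw [dif_pos L.2]
    rw [hc]
    linarith [h0]

set_option maxHeartbeats 2000000 in
/-- The merge lemma. -/
lemma mergeLemma (a : Fin n → ℤ) (b : ℤ) (L : SPTree n) :
    ∀ (R : SPTree n) (S' : Finset (LinIneq n)),
    R.valid (polytopeOf (↑(insert (⟨a, b⟩ : LinIneq n) S') : Set (LinIneq n))) →
    R.pathlike (polytopeOf (↑(insert (⟨a, b⟩ : LinIneq n) S') : Set (LinIneq n))) →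
    (∀ x ∈ polytopeOf (↑S' : Set (LinIneq n)), dotIR a x ≤ (b : ℝ)) →
    L.valid (polytopeOf (↑S' : Set (LinIneq n)) ∩ leSet a b) →
    L.pathlike (polytopeOf (↑S' : Set (LinIneq n)) ∩ leSet a b) →
    ∃ T' : SPTree n, T'.valid (polytopeOf (↑S' : Set (LinIneq n))) ∧
      T'.pathlike (polytopeOf (↑S' : Set (LinIneq n))) ∧
      T'.size ≤ R.size + L.size + 1 := by
  intro R
  induction R with
  | leaf =>
    intro S' hRv hRp hab hLv hLp
    have hFe : polytopeOf (↑S' : Set (LinIneq n)) ∩ geSet a b = ∅ := by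
      rw [← polytopeOf_insert_ge, ← Finset.coe_insert]
      exact hRv
    exact ⟨SPTree.node a b L SPTree.leaf, ⟨hLv, hFe⟩, ⟨Or.inr hFe, hLp, trivial⟩,
      by simp [SPTree.size]⟩
  | node d e R₁ R₂ ih₁ ih₂ =>
    intro S' hRv hRp hab hLv hLp
    have hFeq : polytopeOf (↑(insert (⟨a, b⟩ : LinIneq n) S') : Set (LinIneq n))
        = polytopeOf (↑S' : Set (LinIneq n)) ∩ geSet a b := by
      rw [Finset.coe_insert, polytopeOf_insert_ge]
    by_cases hF : polytopeOf (↑(insert (⟨a, b⟩ : LinIneq n) S') : Set (LinIneq n)) = ∅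
    · have hFe : polytopeOf (↑S' : Set (LinIneq n)) ∩ geSet a b = ∅ := by
        rw [← hFeq]; exact hF
      refine ⟨SPTree.node a b L SPTree.leaf, ⟨hLv, hFe⟩, ⟨Or.inr hFe, hLp, trivial⟩, ?_⟩
      simp only [SPTree.size]
      omega
    · obtain ⟨x₀, hx₀⟩ := Set.nonempty_iff_ne_empty.mpr hF
      have hx₀' : x₀ ∈ polytopeOf (↑S' : Set (LinIneq n)) ∩ geSet a b := by
        rw [← hFeq]; exact hx₀
      obtain ⟨hv₁, hv₂⟩ := hRv
      obtain ⟨hdisj, hp₁, hp₂⟩ := hRp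
      rcases hdisj with hle | hge
      · -- Case A : the `≤` side of the query `(d, e)` misses the face
        have hempty : ∀ x : Fin n → ℝ, ¬((⟨-d, 1 - e⟩ : LinIneq n).sat x ∧
            (⟨a, b⟩ : LinIneq n).sat x ∧ x ∈ polytopeOf (↑S' : Set (LinIneq n))) := by
          rintro x ⟨h1, h2, h3⟩
          have hxF : x ∈ polytopeOf (↑(insert (⟨a, b⟩ : LinIneq n) S') : Set (LinIneq n)) := by
            rw [hFeq]; exact ⟨h3, h2⟩
          have hxle : x ∈ leSet d e := by
            have h1' : dotIR (-d) x ≥ ((1 - e : ℤ) : ℝ) := h1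
            rw [dotIR_neg] at h1'
            show dotIR d x ≤ (e : ℝ) - 1
            push_cast at h1'
            linarith
          have : x ∈ polytopeOf (↑(insert (⟨a, b⟩ : LinIneq n) S') : Set (LinIneq n))
              ∩ leSet d e := ⟨hxF, hxle⟩
          rw [hle] at this
          exact this
        obtain ⟨ν, μ, lam, hν, hμ, hlam, hA, hpos⟩ := farkas2 S' ⟨-d, 1 - e⟩ ⟨a, b⟩ hempty
        push_cast at hpos
        have hν0 : 0 < ν := by
          rcases hν.lt_or_eq with h | h
          · exact h
          exfalso
          have hev := eval_combo ν μ ⟨-d, 1 - e⟩ ⟨a, b⟩ S' lam x₀ hA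
          have hcb := combo_bound S' lam hlam x₀ hx₀'.1
          have hx₀ge : dotIR a x₀ ≥ (b : ℝ) := hx₀'.2
          rw [show (⟨-d, 1 - e⟩ : LinIneq n).a = -d from rfl, dotIR_neg] at hev
          rw [← h] at hev hpos
          simp only [zero_mul, zero_add] at hev hpos
          nlinarith [mul_le_mul_of_nonneg_left hx₀ge hμ]
        have hstar : ∀ x ∈ polytopeOf (↑S' : Set (LinIneq n)),
            ν * ((e : ℝ) - 1) - μ * (b : ℝ) < ν * dotIR d x - μ * dotIR a x := by
          intro x hx
          have hev := eval_combo ν μ ⟨-d, 1 - e⟩ ⟨a, b⟩ S' lam x hA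
          have hcb := combo_bound S' lam hlam x hx
          rw [show (⟨-d, 1 - e⟩ : LinIneq n).a = -d from rfl, dotIR_neg] at hev
          have : (⟨a, b⟩ : LinIneq n).a = a := rfl
          rw [this] at hev
          nlinarith [hev, hcb, hpos]
        set m : ℤ := ⌈(μ / ν : ℝ)⌉ with hm
        have hmν : μ ≤ ν * (m : ℝ) := by
          have h1 : (μ / ν : ℝ) ≤ (m : ℝ) := Int.le_ceil _
          calc μ = ν * (μ / ν) := by field_simp
          _ ≤ ν * (m : ℝ) := mul_le_mul_of_nonneg_left h1 (le_of_lt hν0)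
        have hkey : ∀ x ∈ polytopeOf (↑S' : Set (LinIneq n)),
            (e : ℝ) - 1 - (m : ℝ) * (b : ℝ) < dotIR d x - (m : ℝ) * dotIR a x := by
          intro x hx
          have h1 := hstar x hx
          have h2 := hab x hx
          have h3 := mul_le_mul_of_nonneg_left h2 (sub_nonneg.mpr hmν)
          have h4 : ν * ((e : ℝ) - 1 - (m : ℝ) * (b : ℝ))
              < ν * (dotIR d x - (m : ℝ) * dotIR a x) := by nlinarith [h1, h3]
          have h5 := (mul_lt_mul_iff_right₀ hν0).mp h4
          linarith
        have hdotstar : ∀ x : Fin n → ℝ,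
            dotIR (fun t => d t - m * a t) x = dotIR d x - (m : ℝ) * dotIR a x :=
          fun x => dotIR_sub_mul d a m x
        have hleEmpty : polytopeOf (↑S' : Set (LinIneq n))
            ∩ leSet (fun t => d t - m * a t) (e - m * b) = ∅ := by
          ext x
          simp only [Set.mem_inter_iff, Set.mem_empty_iff_false, iff_false, not_and]
          intro hx hxle
          have h1 := hkey x hx
          have h2 : dotIR (fun t => d t - m * a t) x ≤ ((e - m * b : ℤ) : ℝ) - 1 := hxle
          rw [hdotstar] at h2
          push_cast at h2
          linarith
        have hface : polytopeOf (↑(insert (⟨a, b⟩ : LinIneq n)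
              (insert (⟨fun t => d t - m * a t, e - m * b⟩ : LinIneq n) S')) : Set (LinIneq n))
            = polytopeOf (↑(insert (⟨a, b⟩ : LinIneq n) S') : Set (LinIneq n)) ∩ geSet d e := by
          rw [Finset.coe_insert, Finset.coe_insert, polytopeOf_insert_ge, polytopeOf_insert_ge,
            hFeq]
          ext x
          simp only [Set.mem_inter_iff]
          constructor
          · rintro ⟨⟨hx, hds⟩, hge⟩
            have heq : dotIR a x = (b : ℝ) := le_antisymm (hab x hx) hge
            refine ⟨⟨hx, hge⟩, ?_⟩
            have hds' : dotIR (fun t => d t - m * a t) x ≥ ((e - m * b : ℤ) : ℝ) := hds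
            rw [hdotstar] at hds'
            push_cast at hds'
            show dotIR d x ≥ (e : ℝ)
            rw [heq] at hds'
            linarith
          · rintro ⟨⟨hx, hge⟩, hde⟩
            have heq : dotIR a x = (b : ℝ) := le_antisymm (hab x hx) hge
            refine ⟨⟨hx, ?_⟩, hge⟩
            show dotIR (fun t => d t - m * a t) x ≥ ((e - m * b : ℤ) : ℝ)
            rw [hdotstar]
            push_cast
            rw [heq]
            have hde' : dotIR d x ≥ (e : ℝ) := hde
            linarith
        have hPnew : polytopeOf (↑(insert (⟨fun t => d t - m * a t, e - m * b⟩ : LinIneq n) S')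
              : Set (LinIneq n))
            = polytopeOf (↑S' : Set (LinIneq n)) ∩ geSet (fun t => d t - m * a t) (e - m * b) := by
          rw [Finset.coe_insert, polytopeOf_insert_ge]
        have hsub : polytopeOf (↑(insert (⟨fun t => d t - m * a t, e - m * b⟩ : LinIneq n) S')
              : Set (LinIneq n)) ⊆ polytopeOf (↑S' : Set (LinIneq n)) := by
          rw [hPnew]; exact Set.inter_subset_left
        have hLsub : polytopeOf (↑(insert (⟨fun t => d t - m * a t, e - m * b⟩
              : LinIneq n) S') : Set (LinIneq n))
            ∩ leSet a b ⊆ polytopeOf (↑S' : Set (LinIneq n)) ∩ leSet a b :=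
          Set.inter_subset_inter_left _ hsub
        have hLv' := valid_mono L _ _ hLsub hLv
        have hLp' := pathlike_mono L _ _ hLsub hLp
        have hv' : R₂.valid (polytopeOf (↑(insert (⟨a, b⟩ : LinIneq n)
            (insert (⟨fun t => d t - m * a t, e - m * b⟩ : LinIneq n) S'))
              : Set (LinIneq n))) := by
          rw [hface]; exact hv₂
        have hp' : R₂.pathlike (polytopeOf (↑(insert (⟨a, b⟩ : LinIneq n)
            (insert (⟨fun t => d t - m * a t, e - m * b⟩ : LinIneq n) S'))
              : Set (LinIneq n))) := by
          rw [hface]; exact hp₂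
        obtain ⟨T₂, hT₂v, hT₂p, hT₂s⟩ := ih₂
          (insert ⟨fun t => d t - m * a t, e - m * b⟩ S')
          hv' hp' (fun x hx => hab x (hsub hx)) hLv' hLp'
        rw [hPnew] at hT₂v hT₂p
        refine ⟨SPTree.node (fun t => d t - m * a t) (e - m * b) SPTree.leaf T₂,
          ⟨hleEmpty, hT₂v⟩, ⟨Or.inl hleEmpty, trivial, hT₂p⟩, ?_⟩
        simp only [SPTree.size] at hT₂s ⊢
        omega
      · -- Case B : the `≥` side of the query `(d, e)` misses the face
        have hempty : ∀ x : Fin n → ℝ, ¬((⟨d, e⟩ : LinIneq n).sat x ∧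
            (⟨a, b⟩ : LinIneq n).sat x ∧ x ∈ polytopeOf (↑S' : Set (LinIneq n))) := by
          rintro x ⟨h1, h2, h3⟩
          have hxF : x ∈ polytopeOf (↑(insert (⟨a, b⟩ : LinIneq n) S') : Set (LinIneq n)) := by
            rw [hFeq]; exact ⟨h3, h2⟩
          have hxge : x ∈ geSet d e := h1
          have : x ∈ polytopeOf (↑(insert (⟨a, b⟩ : LinIneq n) S') : Set (LinIneq n))
              ∩ geSet d e := ⟨hxF, hxge⟩
          rw [hge] at this
          exact this
        obtain ⟨ν, μ, lam, hν, hμ, hlam, hA, hpos⟩ := farkas2 S' ⟨d, e⟩ ⟨a, b⟩ hempty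
        push_cast at hpos
        have hν0 : 0 < ν := by
          rcases hν.lt_or_eq with h | h
          · exact h
          exfalso
          have hev := eval_combo ν μ ⟨d, e⟩ ⟨a, b⟩ S' lam x₀ hA
          have hcb := combo_bound S' lam hlam x₀ hx₀'.1
          have hx₀ge : dotIR a x₀ ≥ (b : ℝ) := hx₀'.2
          rw [← h] at hev hpos
          simp only [zero_mul, zero_add] at hev hpos
          nlinarith [mul_le_mul_of_nonneg_left hx₀ge hμ]
        have hstar : ∀ x ∈ polytopeOf (↑S' : Set (LinIneq n)),
            ν * (-(e : ℝ)) - μ * (b : ℝ) < ν * (- dotIR d x) - μ * dotIR a x := by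
          intro x hx
          have hev := eval_combo ν μ ⟨d, e⟩ ⟨a, b⟩ S' lam x hA
          have hcb := combo_bound S' lam hlam x hx
          nlinarith [hev, hcb, hpos]
        set m : ℤ := ⌈(μ / ν : ℝ)⌉ with hm
        have hmν : μ ≤ ν * (m : ℝ) := by
          have h1 : (μ / ν : ℝ) ≤ (m : ℝ) := Int.le_ceil _
          calc μ = ν * (μ / ν) := by field_simp
          _ ≤ ν * (m : ℝ) := mul_le_mul_of_nonneg_left h1 (le_of_lt hν0)
        have hkey : ∀ x ∈ polytopeOf (↑S' : Set (LinIneq n)),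
            -(e : ℝ) - (m : ℝ) * (b : ℝ) < - dotIR d x - (m : ℝ) * dotIR a x := by
          intro x hx
          have h1 := hstar x hx
          have h2 := hab x hx
          have h3 := mul_le_mul_of_nonneg_left h2 (sub_nonneg.mpr hmν)
          have h4 : ν * (-(e : ℝ) - (m : ℝ) * (b : ℝ))
              < ν * (- dotIR d x - (m : ℝ) * dotIR a x) := by nlinarith [h1, h3]
          have h5 := (mul_lt_mul_iff_right₀ hν0).mp h4
          linarith
        have hdotstar : ∀ x : Fin n → ℝ,
            dotIR (fun t => -(d t) - m * a t) x = - dotIR d x - (m : ℝ) * dotIR a x :=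
          fun x => dotIR_neg_sub_mul d a m x
        have hleEmpty : polytopeOf (↑S' : Set (LinIneq n))
            ∩ leSet (fun t => -(d t) - m * a t) (1 - e - m * b) = ∅ := by
          ext x
          simp only [Set.mem_inter_iff, Set.mem_empty_iff_false, iff_false, not_and]
          intro hx hxle
          have h1 := hkey x hx
          have h2 : dotIR (fun t => -(d t) - m * a t) x ≤ ((1 - e - m * b : ℤ) : ℝ) - 1 := hxle
          rw [hdotstar] at h2
          push_cast at h2
          linarith
        have hface : polytopeOf (↑(insert (⟨a, b⟩ : LinIneq n)
              (insert (⟨fun t => -(d t) - m * a t, 1 - e - m * b⟩ : LinIneq n) S'))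
              : Set (LinIneq n))
            = polytopeOf (↑(insert (⟨a, b⟩ : LinIneq n) S') : Set (LinIneq n)) ∩ leSet d e := by
          rw [Finset.coe_insert, Finset.coe_insert, polytopeOf_insert_ge, polytopeOf_insert_ge,
            hFeq]
          ext x
          simp only [Set.mem_inter_iff]
          constructor
          · rintro ⟨⟨hx, hds⟩, hge'⟩
            have heq : dotIR a x = (b : ℝ) := le_antisymm (hab x hx) hge'
            refine ⟨⟨hx, hge'⟩, ?_⟩
            have hds' : dotIR (fun t => -(d t) - m * a t) x ≥ ((1 - e - m * b : ℤ) : ℝ) := hds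
            rw [hdotstar] at hds'
            push_cast at hds'
            show dotIR d x ≤ (e : ℝ) - 1
            rw [heq] at hds'
            linarith
          · rintro ⟨⟨hx, hge'⟩, hde⟩
            have heq : dotIR a x = (b : ℝ) := le_antisymm (hab x hx) hge'
            refine ⟨⟨hx, ?_⟩, hge'⟩
            show dotIR (fun t => -(d t) - m * a t) x ≥ ((1 - e - m * b : ℤ) : ℝ)
            rw [hdotstar]
            push_cast
            rw [heq]
            have hde' : dotIR d x ≤ (e : ℝ) - 1 := hde
            linarith
        have hPnew : polytopeOf (↑(insert (⟨fun t => -(d t) - m * a t, 1 - e - m * b⟩ : LinIneq n)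
              S') : Set (LinIneq n))
            = polytopeOf (↑S' : Set (LinIneq n))
              ∩ geSet (fun t => -(d t) - m * a t) (1 - e - m * b) := by
          rw [Finset.coe_insert, polytopeOf_insert_ge]
        have hsub : polytopeOf (↑(insert (⟨fun t => -(d t) - m * a t, 1 - e - m * b⟩ : LinIneq n)
              S') : Set (LinIneq n)) ⊆ polytopeOf (↑S' : Set (LinIneq n)) := by
          rw [hPnew]; exact Set.inter_subset_left
        have hLsub : polytopeOf (↑(insert (⟨fun t => -(d t) - m * a t, 1 - e - m * b⟩
              : LinIneq n) S') : Set (LinIneq n))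
            ∩ leSet a b ⊆ polytopeOf (↑S' : Set (LinIneq n)) ∩ leSet a b :=
          Set.inter_subset_inter_left _ hsub
        have hLv' := valid_mono L _ _ hLsub hLv
        have hLp' := pathlike_mono L _ _ hLsub hLp
        have hv' : R₁.valid (polytopeOf (↑(insert (⟨a, b⟩ : LinIneq n)
            (insert (⟨fun t => -(d t) - m * a t, 1 - e - m * b⟩ : LinIneq n) S'))
              : Set (LinIneq n))) := by
          rw [hface]; exact hv₁
        have hp' : R₁.pathlike (polytopeOf (↑(insert (⟨a, b⟩ : LinIneq n)
            (insert (⟨fun t => -(d t) - m * a t, 1 - e - m * b⟩ : LinIneq n) S'))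
              : Set (LinIneq n))) := by
          rw [hface]; exact hp₁
        obtain ⟨T₁, hT₁v, hT₁p, hT₁s⟩ := ih₁
          (insert ⟨fun t => -(d t) - m * a t, 1 - e - m * b⟩ S')
          hv' hp' (fun x hx => hab x (hsub hx)) hLv' hLp'
        rw [hPnew] at hT₁v hT₁p
        refine ⟨SPTree.node (fun t => -(d t) - m * a t) (1 - e - m * b) SPTree.leaf T₁,
          ⟨hleEmpty, hT₁v⟩, ⟨Or.inl hleEmpty, trivial, hT₁p⟩, ?_⟩
        simp only [SPTree.size] at hT₁s ⊢
        omega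

set_option maxHeartbeats 1000000 in
/-- Main auxiliary result: conversion of facelike refutations into pathlike ones, for
polytopes given by finite systems. -/
lemma mainAux : ∀ (T : SPTree n) (S' : Finset (LinIneq n)),
    T.valid (polytopeOf (↑S' : Set (LinIneq n))) →
    T.facelike (polytopeOf (↑S' : Set (LinIneq n))) →
    ∃ T' : SPTree n, T'.valid (polytopeOf (↑S' : Set (LinIneq n))) ∧
      T'.pathlike (polytopeOf (↑S' : Set (LinIneq n))) ∧ T'.size ≤ T.size := by
  intro T
  induction T with
  | leaf =>
    intro S' hv _
    exact ⟨SPTree.leaf, hv, trivial, le_refl _⟩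
  | node a b l r ihl ihr =>
    intro S' hv hf
    obtain ⟨hvl, hvr⟩ := hv
    obtain ⟨hdisj, hfl, hfr⟩ := hf
    have hPle : polytopeOf (↑(insert (⟨-a, 1 - b⟩ : LinIneq n) S') : Set (LinIneq n))
        = polytopeOf (↑S' : Set (LinIneq n)) ∩ leSet a b := by
      rw [Finset.coe_insert, polytopeOf_insert_le]
    have hPge : polytopeOf (↑(insert (⟨a, b⟩ : LinIneq n) S') : Set (LinIneq n))
        = polytopeOf (↑S' : Set (LinIneq n)) ∩ geSet a b := by
      rw [Finset.coe_insert, polytopeOf_insert_ge]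
    obtain ⟨Lt, hLv, hLp, hLs⟩ := ihl (insert ⟨-a, 1 - b⟩ S')
      (by rw [hPle]; exact hvl) (by rw [hPle]; exact hfl)
    obtain ⟨Rt, hRv, hRp, hRs⟩ := ihr (insert ⟨a, b⟩ S')
      (by rw [hPge]; exact hvr) (by rw [hPge]; exact hfr)
    rw [hPle] at hLv hLp
    rw [hPge] at hRv hRp
    rcases hdisj with h1 | h2 | h3 | h4
    · -- left side empty
      exact ⟨SPTree.node a b SPTree.leaf Rt, ⟨h1, hRv⟩, ⟨Or.inl h1, trivial, hRp⟩,
        by simp only [SPTree.size]; omega⟩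
    · -- left side is a face
      by_cases hge0 : polytopeOf (↑S' : Set (LinIneq n)) ∩ geSet a b = ∅
      · exact ⟨SPTree.node a b Lt SPTree.leaf, ⟨hLv, hge0⟩, ⟨Or.inr hge0, hLp, trivial⟩,
          by simp only [SPTree.size]; omega⟩
      · have hne : (polytopeOf (↑S' : Set (LinIneq n)) ∩ geSet a b).Nonempty :=
          Set.nonempty_iff_ne_empty.mpr hge0
        have hfaceR : IsFace (polytopeOf (↑S' : Set (LinIneq n)))
            (polytopeOf (↑S' : Set (LinIneq n)) ∩ geSet (-a) (1 - b)) := by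
          rw [geSet_neg]; exact h2
        have hneR : (polytopeOf (↑S' : Set (LinIneq n)) ∩ leSet (-a) (1 - b)).Nonempty := by
          rw [leSet_neg]; exact hne
        have hab := faceKey hfaceR hneR
        obtain ⟨T', hT'v, hT'p, hT's⟩ := mergeLemma (-a) (1 - b) Rt Lt S'
          (by rw [Finset.coe_insert, polytopeOf_insert_ge, geSet_neg]; exact hLv)
          (by rw [Finset.coe_insert, polytopeOf_insert_ge, geSet_neg]; exact hLp)
          hab
          (by rw [leSet_neg]; exact hRv)
          (by rw [leSet_neg]; exact hRp)
        refine ⟨T', hT'v, hT'p, ?_⟩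
        simp only [SPTree.size] at hT's ⊢
        omega
    · -- right side empty
      exact ⟨SPTree.node a b Lt SPTree.leaf, ⟨hLv, h3⟩, ⟨Or.inr h3, hLp, trivial⟩,
        by simp only [SPTree.size]; omega⟩
    · -- right side is a face
      by_cases hle0 : polytopeOf (↑S' : Set (LinIneq n)) ∩ leSet a b = ∅
      · exact ⟨SPTree.node a b SPTree.leaf Rt, ⟨hle0, hRv⟩, ⟨Or.inl hle0, trivial, hRp⟩,
          by simp only [SPTree.size]; omega⟩
      · have hne : (polytopeOf (↑S' : Set (LinIneq n)) ∩ leSet a b).Nonempty :=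
          Set.nonempty_iff_ne_empty.mpr hle0
        have hab := faceKey h4 hne
        obtain ⟨T', hT'v, hT'p, hT's⟩ := mergeLemma a b Lt Rt S'
          (by rw [Finset.coe_insert, polytopeOf_insert_ge]; exact hRv)
          (by rw [Finset.coe_insert, polytopeOf_insert_ge]; exact hRp)
          hab hLv hLp
        refine ⟨T', hT'v, hT'p, ?_⟩
        simp only [SPTree.size] at hT's ⊢
        omega

end Aux

/-- If an unsatisfiable system `S` of integer-linear inequalities in
`n` real variables has a facelike Stabbing Planes refutation with `s` queries, then `S`
has a pathlike Stabbing Planes refutation with at most `s` queries. -/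
theorem facelike_sp_to_pathlike_sp {n : ℕ} (S : Set (LinIneq n)) (hfin : S.Finite)
    (hunsat : ¬ ∃ x : Fin n → ℤ, ∀ L ∈ S, L.sat fun i => (x i : ℝ))
    (T : SPTree n) (hvalid : T.valid (polytopeOf S)) (hface : T.facelike (polytopeOf S)) :
    ∃ T' : SPTree n, T'.valid (polytopeOf S) ∧ T'.pathlike (polytopeOf S) ∧
      T'.size ≤ T.size := by
  classical
  obtain ⟨T', h1, h2, h3⟩ := mainAux T hfin.toFinset
    (by rw [Set.Finite.coe_toFinset]; exact hvalid)
    (by rw [Set.Finite.coe_toFinset]; exact hface)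
  rw [Set.Finite.coe_toFinset] at h1 h2
  exact ⟨T', h1, h2, h3⟩
end

section
/- Let H, H₁, H₂ ⊆ ℝⁿ be halfspaces such that (1/2,…,1/2) ∈ H and H ∩ {0,1}ⁿ ⊆ H₁ ∪ H₂. Then there exist i ∈ {1,2} and a point y ∈ ℝⁿ such that y ∈ H_i, at most two coordinates of y lie in {0,1}, and every other coordinate of y equals 1/2. -/
/-! Suppose no such point lies in `H₁` or `H₂`, and write `Hᵢ = {wᵢ·x ≥ cᵢ}`. Testing the points
with one or two coordinates rounded to `0` or `1` shows that any at most two of the numbers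
`|wᵢ k / 2|` sum to less than the slack `cᵢ - wᵢ·½ > 0`. From this, for both `i` at once, one
finds signs `ε` with `|Σ ε k wᵢ k / 2|` below the slack: among three coordinates two have the
same sign pattern in `(w₁, w₂)` up to a global flip, and merging them (adding or subtracting one
to the other) preserves the hypothesis, so induction reduces to at most two coordinates. The
antipodal cube points `(1 ± ε) / 2` average to `½ ∈ H`, so one of them lies in `H`, yet neither
lies in `H₁ ∪ H₂`. -/

open Finset Function

section SignMerge

variable {ι R : Type*} [CommRing R] [DecidableEq ι]

lemma sum_update_mul_eq_sum_erase_mul_update {s : Finset ι} {i j : ι} (ε u : ι → R) (e : R)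
    (hi : i ∈ s) (hj : j ∈ s) (hij : i ≠ j) :
    ∑ k ∈ s, update ε j (e * ε i) k * u k =
      ∑ k ∈ s.erase j, ε k * update u i (u i + e * u j) k := by
  have hi' : i ∈ s.erase j := mem_erase.2 ⟨hij, hi⟩
  rw [← sum_erase_add s _ hj, ← add_sum_erase _ _ hi', ← add_sum_erase (s.erase j) _ hi',
    update_self, update_self, update_of_ne hij]
  have hrest : ∑ k ∈ (s.erase j).erase i, update ε j (e * ε i) k * u k =
      ∑ k ∈ (s.erase j).erase i, ε k * update u i (u i + e * u j) k := by
    refine sum_congr rfl fun k hk => ?_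
    obtain ⟨hki, hk⟩ := mem_erase.1 hk
    rw [update_of_ne (ne_of_mem_erase hk), update_of_ne hki]
  rw [hrest]
  ring

end SignMerge

section Balancing

variable {ι R : Type*} [CommRing R] [LinearOrder R] [IsStrictOrderedRing R]

def PairBounded (s : Finset ι) (u : ι → R) (α : R) : Prop :=
  ∀ t ⊆ s, #t ≤ 2 → ∑ k ∈ t, |u k| < α

lemma abs_add_ite_mul_le_max {a b : R} {p : Prop} [Decidable p] (hp : p ↔ (0 ≤ a ↔ 0 ≤ b)) :
    |a + (if p then -1 else 1) * b| ≤ max |a| |b| := by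
  have ha' := le_max_left |a| |b|
  have hb' := le_max_right |a| |b|
  rw [abs_le]
  rcases abs_cases a with ⟨ea, ha⟩ | ⟨ea, ha⟩ <;> rcases abs_cases b with ⟨eb, hb⟩ | ⟨eb, hb⟩
  · rw [if_pos (hp.2 (iff_of_true ha hb))]; constructor <;> linarith
  · rw [if_neg fun h => ((hp.1 h).1 ha).not_gt hb]; constructor <;> linarith
  · rw [if_neg fun h => ((hp.1 h).2 hb).not_gt ha]; constructor <;> linarith
  · rw [if_pos (hp.2 (iff_of_false ha.not_ge hb.not_ge))]; constructor <;> linarith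

lemma PairBounded.abs_sum_mul_lt {s : Finset ι} {u ε : ι → R} {α : R} (h : PairBounded s u α)
    (hs : #s ≤ 2) (hε : ∀ k, |ε k| = 1) : |∑ k ∈ s, ε k * u k| < α :=
  calc |∑ k ∈ s, ε k * u k| ≤ ∑ k ∈ s, |ε k * u k| := abs_sum_le_sum_abs _ _
    _ = ∑ k ∈ s, |u k| := by simp only [abs_mul, hε, one_mul]
    _ < α := h s subset_rfl hs

variable [DecidableEq ι]

lemma PairBounded.update_erase {s : Finset ι} {u : ι → R} {α z : R} {i j : ι}
    (h : PairBounded s u α) (hi : i ∈ s) (hj : j ∈ s)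
    (hz : |z| ≤ max |u i| |u j|) : PairBounded (s.erase j) (update u i z) α := by
  intro t ht hcard
  by_cases hit : i ∈ t
  · obtain ⟨m, hm, hzm⟩ : ∃ m ∈ s, m ∉ t.erase i ∧ |z| ≤ |u m| := by
      rcases le_max_iff.1 hz with hz | hz
      · exact ⟨i, hi, notMem_erase i t, hz⟩
      · exact ⟨j, hj, fun hjt => (mem_erase.1 (ht (mem_of_mem_erase hjt))).1 rfl, hz⟩
    have hrest : ∀ k ∈ t.erase i, update u i z k = u k := fun k hk =>
      update_of_ne (ne_of_mem_erase hk) _ _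
    calc ∑ k ∈ t, |update u i z k| = |z| + ∑ k ∈ t.erase i, |u k| := by
          rw [← add_sum_erase t _ hit, update_self, sum_congr rfl fun k hk => by rw [hrest k hk]]
      _ ≤ ∑ k ∈ insert m (t.erase i), |u k| := by
          rw [sum_insert hzm.1]; exact add_le_add_left hzm.2 _
      _ < α := by
          refine h _ (insert_subset hm ((erase_subset i t).trans (ht.trans (erase_subset j s)))) ?_
          rw [card_insert_of_notMem hzm.1, card_erase_add_one hit]
          exact hcard
  · have hrest : ∀ k ∈ t, update u i z k = u k := fun k hk =>
      update_of_ne (ne_of_mem_of_not_mem hk hit) _ _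
    rw [sum_congr rfl fun k hk => by rw [hrest k hk]]
    exact h t (ht.trans (erase_subset j s)) hcard

theorem exists_signs_abs_sum_mul_lt (s : Finset ι) {u v : ι → R} {α β : R}
    (hu : PairBounded s u α) (hv : PairBounded s v β) :
    ∃ ε : ι → R, (∀ k, |ε k| = 1) ∧ |∑ k ∈ s, ε k * u k| < α ∧ |∑ k ∈ s, ε k * v k| < β := by
  induction s using Finset.strongInduction generalizing u v with
  | H s ih =>
  by_cases hs : #s ≤ 2
  · exact ⟨1, fun _ => abs_one, hu.abs_sum_mul_lt hs fun _ => abs_one,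
      hv.abs_sum_mul_lt hs fun _ => abs_one⟩
  obtain ⟨i, hi, j, hj, hij, hσ⟩ :
      ∃ i ∈ s, ∃ j ∈ s, i ≠ j ∧ ((0 ≤ u i ↔ 0 ≤ v i) ↔ (0 ≤ u j ↔ 0 ≤ v j)) := by
    obtain ⟨a, b, c, ha, hb, hc, hab, hac, hbc⟩ := two_lt_card_iff.1 (not_le.1 hs)
    by_cases hab' : (0 ≤ u a ↔ 0 ≤ v a) ↔ (0 ≤ u b ↔ 0 ≤ v b)
    · exact ⟨a, ha, b, hb, hab, hab'⟩
    by_cases hac' : (0 ≤ u a ↔ 0 ≤ v a) ↔ (0 ≤ u c ↔ 0 ≤ v c)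
    · exact ⟨a, ha, c, hc, hac, hac'⟩
    exact ⟨b, hb, c, hc, hbc, by tauto⟩
  -- `e` cancels signs in both `u` and `v`, so merging `j` into `i` keeps both bounds
  set e : R := if (0 ≤ u i ↔ 0 ≤ u j) then -1 else 1 with he
  obtain ⟨ε, hε, hεu, hεv⟩ := ih (s.erase j) (erase_ssubset hj)
    (hu.update_erase hi hj (abs_add_ite_mul_le_max Iff.rfl))
    (hv.update_erase hi hj (abs_add_ite_mul_le_max (p := 0 ≤ u i ↔ 0 ≤ u j) (by tauto)))
  refine ⟨update ε j (e * ε i), fun k => ?_, ?_, ?_⟩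
  · rcases eq_or_ne k j with rfl | hk
    · rw [update_self, abs_mul, hε, mul_one, he]
      split_ifs <;> simp
    · rw [update_of_ne hk, hε]
  · rwa [sum_update_mul_eq_sum_erase_mul_update _ _ _ hi hj hij]
  · rwa [sum_update_mul_eq_sum_erase_mul_update _ _ _ hi hj hij]

end Balancing

section Cube

variable {ι 𝕜 : Type*} [Fintype ι] [Field 𝕜] [LinearOrder 𝕜] [IsStrictOrderedRing 𝕜]

lemma pairBounded_of_forall_sum_mul_lt {w : ι → 𝕜} {c : 𝕜}
    (h : ∀ (y : ι → 𝕜) (I : Finset ι), #I ≤ 2 → (∀ i ∈ I, y i = 0 ∨ y i = 1) →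
      (∀ i ∉ I, y i = 1 / 2) → ∑ i, w i * y i < c) :
    PairBounded univ (fun i => w i / 2) (c - ∑ i, w i * (1 / 2)) := by
  classical
  intro t _ ht
  -- rounding the coordinates in `t` towards the sign of `w` gains `|w k / 2|` each
  set y : ι → 𝕜 := fun k => if k ∈ t then (if 0 ≤ w k then 1 else 0) else 1 / 2
  have hy : ∀ k, w k * y k = w k * (1 / 2) + if k ∈ t then |w k / 2| else 0 := by
    intro k
    simp only [y]
    split_ifs with hk hw
    · rw [abs_of_nonneg (div_nonneg hw zero_le_two)]; ring
    · rw [abs_of_neg (div_neg_of_neg_of_pos (not_le.1 hw) two_pos)]; ring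
    · ring
  have hyc := h y t ht (fun k hk => by simp only [y, if_pos hk]; split_ifs <;> simp)
    (fun k hk => by simp only [y, if_neg hk])
  rw [sum_congr rfl fun k _ => hy k, sum_add_distrib, sum_ite_mem, univ_inter] at hyc
  linarith

lemma sum_mul_one_add_mul_div_two (w ε : ι → 𝕜) (t : 𝕜) :
    ∑ k, w k * ((1 + t * ε k) / 2) = ∑ k, w k * (1 / 2) + t * ∑ k, ε k * (w k / 2) := by
  rw [mul_sum, ← sum_add_distrib]
  exact sum_congr rfl fun k _ => by ring

lemma one_add_div_two_eq_zero_or_one {e : 𝕜} (he : |e| = 1) :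
    (1 + e) / 2 = 0 ∨ (1 + e) / 2 = 1 := by
  rcases (abs_eq zero_le_one).1 he with rfl | rfl <;> norm_num

lemma exists_le_sum_mul_one_add_mul_div_two (w ε : ι → 𝕜) {c : 𝕜}
    (hc : c ≤ ∑ k, w k * (1 / 2)) :
    ∃ t : 𝕜, |t| = 1 ∧ c ≤ ∑ k, w k * ((1 + t * ε k) / 2) := by
  simp only [sum_mul_one_add_mul_div_two]
  rcases le_total 0 (∑ k, ε k * (w k / 2)) with h | h
  · exact ⟨1, abs_one, by linarith⟩
  · exact ⟨-1, by simp, by linarith⟩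

lemma sum_mul_one_add_mul_div_two_lt {w ε : ι → 𝕜} {c t : 𝕜} (ht : |t| = 1)
    (h : |∑ k, ε k * (w k / 2)| < c - ∑ k, w k * (1 / 2)) :
    ∑ k, w k * ((1 + t * ε k) / 2) < c := by
  have := le_abs_self (t * ∑ k, ε k * (w k / 2))
  rw [abs_mul, ht, one_mul] at this
  rw [sum_mul_one_add_mul_div_two]
  linarith

end Cube

/-- Let `H = {x : w·x ≥ c}`, `H₁ = {x : w₁·x ≥ c₁}`,
`H₂ = {x : w₂·x ≥ c₂}` be halfspaces in `ℝⁿ` such that `H` contains the all-`1/2`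
point and `H ∩ {0,1}ⁿ ⊆ H₁ ∪ H₂`. Then some `H_i` contains a point `y` having at most
two coordinates in `{0,1}` and all other coordinates equal to `1/2`. -/
theorem good_halfspace_cover {n : ℕ} (w w₁ w₂ : Fin n → ℝ) (c c₁ c₂ : ℝ)
    (hgood : (∑ i, w i * (1 / 2 : ℝ)) ≥ c)
    (hcov : ∀ x : Fin n → ℝ, (∀ i, x i = 0 ∨ x i = 1) →
      (∑ i, w i * x i) ≥ c →
      ((∑ i, w₁ i * x i) ≥ c₁ ∨ (∑ i, w₂ i * x i) ≥ c₂)) :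
    ∃ (y : Fin n → ℝ) (I : Finset (Fin n)), I.card ≤ 2 ∧
      (∀ i ∈ I, y i = 0 ∨ y i = 1) ∧ (∀ i ∉ I, y i = 1 / 2) ∧
      ((∑ i, w₁ i * y i) ≥ c₁ ∨ (∑ i, w₂ i * y i) ≥ c₂) := by
  by_contra! hcon
  obtain ⟨ε, hε, hε₁, hε₂⟩ := exists_signs_abs_sum_mul_lt univ
    (pairBounded_of_forall_sum_mul_lt fun y I hI h₀₁ hhalf => (hcon y I hI h₀₁ hhalf).1)
    (pairBounded_of_forall_sum_mul_lt fun y I hI h₀₁ hhalf => (hcon y I hI h₀₁ hhalf).2)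
  obtain ⟨t, ht, hH⟩ := exists_le_sum_mul_one_add_mul_div_two w ε hgood
  have hcube : ∀ k, (1 + t * ε k) / 2 = 0 ∨ (1 + t * ε k) / 2 = 1 := fun k =>
    one_add_div_two_eq_zero_or_one (by rw [abs_mul, ht, hε, one_mul])
  rcases hcov _ hcube hH with h₁ | h₂
  · exact (sum_mul_one_add_mul_div_two_lt ht hε₁).not_ge h₁
  · exact (sum_mul_one_add_mul_div_two_lt ht hε₂).not_ge h₂
end

section
/- Let n ≥ 2, let H = {x ∈ ℝⁿ : w·x ≥ c} be a halfspace containing the all-1/2 point (1/2,…,1/2), let I ⊆ {1,…,n} with |I| ≥ 2, and let b ∈ {0,1}. Then there exists σ : I → {0,1} with ⊕_{i∈I} σ(i) = b such that the point y defined by y_i = σ(i) for i ∈ I and y_i = 1/2 for i ∉ I satisfies y ∈ H. -/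
/-- Let `n ≥ 2`, let `H = {x : w·x ≥ c}` be a halfspace containing
the all-`1/2` point, let `I ⊆ [n]` with `|I| ≥ 2`, and let `b ∈ {0,1}`. Then there is
`σ : I → {0,1}` with `⊕_{i∈I} σ(i) = b` such that the point equal to `σ` on `I` and to
`1/2` elsewhere lies in `H`. -/
theorem good_halfspace_parity_restriction {n : ℕ} (hn : 2 ≤ n)
    (w : Fin n → ℝ) (c : ℝ)
    (hgood : (∑ i, w i * (1 / 2 : ℝ)) ≥ c)
    (I : Finset (Fin n)) (hI : 2 ≤ I.card) (b : Bool) :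
    ∃ σ : Fin n → Bool,
      ((I.filter fun i => σ i = true).card % 2 = if b then 1 else 0) ∧
      (∑ i, w i * (if i ∈ I then (if σ i then (1 : ℝ) else 0) else 1 / 2)) ≥ c := by
  classical
  obtain ⟨i0, i1, hi0, hi1, hne⟩ := Finset.one_lt_card_iff.mp hI
  set J : Finset (Fin n) := I \ {i0, i1} with hJ
  have hchoice : ∀ t : Bool, ∃ s0 s1 : Bool, xor s0 s1 = t ∧
      (w i0 + w i1) / 2 ≤ w i0 * (if s0 then (1:ℝ) else 0) + w i1 * (if s1 then (1:ℝ) else 0) := by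
    intro t
    cases t
    · rcases le_or_gt 0 (w i0 + w i1) with h | h
      · refine ⟨true, true, rfl, ?_⟩
        norm_num; linarith
      · refine ⟨false, false, rfl, ?_⟩
        norm_num; linarith
    · rcases le_total (w i0) (w i1) with h | h
      · refine ⟨false, true, rfl, ?_⟩
        norm_num; linarith
      · refine ⟨true, false, rfl, ?_⟩
        norm_num; linarith
  obtain ⟨s0, s1, hpar, hval⟩ := hchoice
    (xor b (decide ((J.filter (fun i => decide (0 ≤ w i) = true)).card % 2 = 1)))
  set σ : Fin n → Bool := fun i => if i = i0 then s0 else if i = i1 then s1 else decide (0 ≤ w i)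
    with hσ
  have hσ0 : σ i0 = s0 := by simp [hσ]
  have hσ1 : σ i1 = s1 := by simp [hσ, hne.symm]
  have hsub : ({i0, i1} : Finset (Fin n)) ⊆ I := by
    intro x hx
    rcases Finset.mem_insert.mp hx with h | h
    · exact h ▸ hi0
    · exact (Finset.mem_singleton.mp h) ▸ hi1
  refine ⟨σ, ?_, ?_⟩
  · -- parity
    have hdisj : Disjoint (J.filter fun i => σ i = true)
        (({i0, i1} : Finset (Fin n)).filter fun i => σ i = true) :=
      Disjoint.mono (Finset.filter_subset _ _) (Finset.filter_subset _ _) Finset.sdiff_disjoint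
    have hcard : (I.filter fun i => σ i = true).card
        = (J.filter fun i => σ i = true).card
          + (({i0, i1} : Finset (Fin n)).filter fun i => σ i = true).card := by
      rw [← Finset.card_union_of_disjoint hdisj, ← Finset.filter_union,
        Finset.sdiff_union_of_subset hsub]
    have hJeq : (J.filter fun i => σ i = true) = J.filter (fun i => decide (0 ≤ w i) = true) := by
      apply Finset.filter_congr
      intro x hx
      have hx0 : x ≠ i0 := by
        intro h; subst h; simp [hJ] at hx
      have hx1 : x ≠ i1 := by
        intro h; subst h; simp [hJ] at hx
      simp [hσ, hx0, hx1]
    have hpaircard : (({i0, i1} : Finset (Fin n)).filter fun i => σ i = true).card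
        = (if s0 then 1 else 0) + (if s1 then 1 else 0) := by
      rw [Finset.filter_insert, Finset.filter_singleton, hσ0, hσ1]
      rcases Bool.dichotomy s0 with h0 | h0 <;> rcases Bool.dichotomy s1 with h1 | h1 <;>
        simp [h0, h1, hne]
    rw [hcard, hJeq, hpaircard]
    rcases Bool.dichotomy b with hb | hb <;> subst hb <;>
      rcases Bool.dichotomy s0 with h0 | h0 <;> subst h0 <;>
      rcases Bool.dichotomy s1 with h1 | h1 <;> subst h1 <;>
      simp at hpar ⊢ <;> omega
  · -- sum
    have hsubU : ({i0, i1} : Finset (Fin n)) ⊆ Finset.univ := Finset.subset_univ _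
    set f : Fin n → ℝ := fun i => w i * (if i ∈ I then (if σ i then (1 : ℝ) else 0) else 1 / 2)
      with hf
    set g : Fin n → ℝ := fun i => w i * (1 / 2 : ℝ) with hg
    have hdf := Finset.sum_sdiff (f := f) hsubU
    have hdg := Finset.sum_sdiff (f := g) hsubU
    have hrest : ∑ i ∈ Finset.univ \ {i0, i1}, g i ≤ ∑ i ∈ Finset.univ \ {i0, i1}, f i := by
      apply Finset.sum_le_sum
      intro i hi
      have hi0' : i ≠ i0 := by
        intro h; subst h; simp at hi
      have hi1' : i ≠ i1 := by
        intro h; subst h; simp at hi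
      by_cases hiI : i ∈ I
      · have hσi : σ i = decide (0 ≤ w i) := by simp [hσ, hi0', hi1']
        rcases le_or_gt 0 (w i) with hw | hw
        · have : σ i = true := by rw [hσi]; simpa using hw
          simp [hf, hg, hiI, this]; linarith
        · have : σ i = false := by rw [hσi]; simpa using not_le.mpr hw
          simp [hf, hg, hiI, this]; linarith
      · simp [hf, hg, hiI]
    have hpairf : ∑ i ∈ ({i0, i1} : Finset (Fin n)), f i = f i0 + f i1 :=
      Finset.sum_pair hne
    have hpairg : ∑ i ∈ ({i0, i1} : Finset (Fin n)), g i = g i0 + g i1 :=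
      Finset.sum_pair hne
    have hpairle : g i0 + g i1 ≤ f i0 + f i1 := by
      have hf0 : f i0 = w i0 * (if s0 then (1:ℝ) else 0) := by simp [hf, hi0, hσ0]
      have hf1 : f i1 = w i1 * (if s1 then (1:ℝ) else 0) := by simp [hf, hi1, hσ1]
      rw [hf0, hf1, hg]
      have h2 : w i0 * (1/2 : ℝ) + w i1 * (1/2) = (w i0 + w i1) / 2 := by ring
      rw [h2]
      exact hval
    have hfg : ∑ i, g i ≤ ∑ i, f i := by
      rw [← hdf, ← hdg, hpairf, hpairg]
      linarith
    calc c ≤ ∑ i, g i := hgood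
      _ ≤ ∑ i, f i := hfg
end

section
/- Let H, H₁, H₂ ⊆ ℝⁿ be halfspaces such that the origin 0ⁿ ∈ H and H ∩ {−1,1}ⁿ ⊆ H₁ ∪ H₂. Then at least one of H₁, H₂ contains a point y ∈ {−1,0,1}ⁿ having at most two coordinates in {−1,1}. -/
section GoodHalfspaceAux
open Finset

/-- Alternating sum of `V` over `[a, b)`, starting with `+V a`. -/
private def altS (V : ℕ → ℝ) (a b : ℕ) : ℝ := ∑ i ∈ Ico a b, (-1 : ℝ) ^ (i - a) * V i

private lemma altS_bounds (V : ℕ → ℝ) (hanti : ∀ k l : ℕ, k ≤ l → V l ≤ V k)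
    (h0 : ∀ k, 0 ≤ V k) : ∀ d a : ℕ, 0 ≤ altS V a (a + d) ∧ altS V a (a + d) ≤ V a := by
  intro d
  induction d with
  | zero => intro a; simp [altS, h0 a]
  | succ d ih =>
    intro a
    have hab : a < a + (d + 1) := by omega
    have key : altS V a (a + (d + 1)) = V a - altS V (a + 1) ((a + 1) + d) := by
      unfold altS
      rw [Finset.sum_eq_sum_Ico_succ_bot hab]
      have h1 : ∀ i ∈ Ico (a + 1) (a + (d + 1)),
          (-1 : ℝ) ^ (i - a) * V i = -((-1 : ℝ) ^ (i - (a + 1)) * V i) := by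
        intro i hi
        have hi' := (Finset.mem_Ico.mp hi).1
        have he : i - a = (i - (a + 1)) + 1 := by omega
        rw [he, pow_succ]; ring
      rw [Finset.sum_congr rfl h1, Finset.sum_neg_distrib]
      have : a + (d + 1) = (a + 1) + d := by omega
      rw [this, Nat.sub_self, pow_zero, one_mul, ← sub_eq_add_neg]
    rw [key]
    obtain ⟨h1, h2⟩ := ih (a + 1)
    have h3 := hanti a (a + 1) (by omega)
    constructor <;> linarith

private lemma altS_nonneg (V : ℕ → ℝ) (hanti : ∀ k l : ℕ, k ≤ l → V l ≤ V k)
    (h0 : ∀ k, 0 ≤ V k) (a b : ℕ) : 0 ≤ altS V a b := by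
  rcases le_or_gt b a with h | h
  · unfold altS; rw [Finset.Ico_eq_empty (by omega)]; simp
  · have : b = a + (b - a) := by omega
    rw [this]; exact (altS_bounds V hanti h0 (b - a) a).1

private lemma altS_le (V : ℕ → ℝ) (hanti : ∀ k l : ℕ, k ≤ l → V l ≤ V k)
    (h0 : ∀ k, 0 ≤ V k) (a b : ℕ) : altS V a b ≤ V a := by
  rcases le_or_gt b a with h | h
  · unfold altS; rw [Finset.Ico_eq_empty (by omega)]; simpa using h0 a
  · have : b = a + (b - a) := by omega
    rw [this]; exact (altS_bounds V hanti h0 (b - a) a).2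

/-- The chain vectors: coordinate 0 pinned to 1; coordinate `k ≥ 1` has been
"kept" at step `k` (if `k ≤ t`) and flips at every other step. -/
private def Xc (t k : ℕ) : ℝ :=
  if k = 0 then 1 else if k ≤ t then (-1 : ℝ) ^ (t + k) else (-1 : ℝ) ^ (t + k + 1)

private lemma Xc_pm (t k : ℕ) : Xc t k = -1 ∨ Xc t k = 1 := by
  unfold Xc
  split_ifs with h1 h2
  · right; rfl
  · rcases neg_one_pow_eq_or ℝ (t + k) with h | h <;> [right; left] <;> exact h
  · rcases neg_one_pow_eq_or ℝ (t + k + 1) with h | h <;> [right; left] <;> exact h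

/-- Evaluation of `∑ V k * Xc t k` via alternating sums. -/
private lemma sum_Xc (V : ℕ → ℝ) (n t : ℕ) (hn : 1 ≤ n) (ht : t + 1 ≤ n) :
    ∑ k ∈ range n, V k * Xc t k
      = V 0 + (-1 : ℝ) ^ (t + 1) * altS V 1 (t + 1) + altS V (t + 1) n := by
  rw [Finset.range_eq_Ico, Finset.sum_eq_sum_Ico_succ_bot (by omega : 0 < n)]
  have h0 : V 0 * Xc t 0 = V 0 := by unfold Xc; simp
  rw [h0]
  rw [← Finset.sum_Ico_consecutive (fun k => V k * Xc t k) (by omega : 1 ≤ t + 1) ht]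
  have h1 : ∑ k ∈ Ico 1 (t + 1), V k * Xc t k
      = (-1 : ℝ) ^ (t + 1) * altS V 1 (t + 1) := by
    unfold altS
    rw [Finset.mul_sum]
    apply Finset.sum_congr rfl
    intro k hk
    obtain ⟨hk1, hk2⟩ := Finset.mem_Ico.mp hk
    have hXc : Xc t k = (-1 : ℝ) ^ (t + k) := by
      unfold Xc; rw [if_neg (by omega), if_pos (by omega)]
    rw [hXc]
    have he : (t + 1) + (k - 1) = t + k := by omega
    rw [← he, pow_add]; ring
  have h2 : ∑ k ∈ Ico (t + 1) n, V k * Xc t k = altS V (t + 1) n := by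
    unfold altS
    apply Finset.sum_congr rfl
    intro k hk
    obtain ⟨hk1, hk2⟩ := Finset.mem_Ico.mp hk
    have hXc : Xc t k = (-1 : ℝ) ^ (t + k + 1) := by
      unfold Xc; rw [if_neg (by omega), if_neg (by omega)]
    rw [hXc]
    have he : t + k + 1 = (k - (t + 1)) + 2 * (t + 1) := by omega
    rw [he, pow_add, pow_mul]
    norm_num
    ring
  rw [h1, h2]
  ring

/-- Every chain point lies in the halfspace `H`. -/
private lemma memT (V : ℕ → ℝ) (hanti : ∀ k l : ℕ, k ≤ l → V l ≤ V k)
    (h0 : ∀ k, 0 ≤ V k) (c : ℝ) (hc : c ≤ 0) (n t : ℕ) (hn : 1 ≤ n) (ht : t + 1 ≤ n) :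
    ∑ k ∈ range n, V k * Xc t k ≥ c := by
  rw [sum_Xc V n t hn ht]
  have hA0 := altS_nonneg V hanti h0 1 (t + 1)
  have hA1 := altS_le V hanti h0 1 (t + 1)
  have hB0 := altS_nonneg V hanti h0 (t + 1) n
  have h01 := hanti 0 1 (by omega)
  have hsgn : (-1 : ℝ) ^ (t + 1) * altS V 1 (t + 1) ≥ -altS V 1 (t + 1) := by
    rcases neg_one_pow_eq_or ℝ (t + 1) with h | h <;> rw [h] <;> linarith
  linarith

/-- Midpoint of consecutive chain points: supported on `{0, t+1}` with value 1. -/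
private lemma mid_step_eq (t k : ℕ) :
    (Xc t k + Xc (t + 1) k) / 2 = if k = 0 then 1 else if k = t + 1 then 1 else 0 := by
  unfold Xc
  rcases eq_or_ne k 0 with hk0 | hk0
  · simp [hk0]
  rw [if_neg hk0, if_neg hk0, if_neg hk0]
  rcases le_or_gt k t with hkt | hkt
  · rw [if_pos hkt, if_pos (by omega), if_neg (by omega)]
    have : t + 1 + k = (t + k) + 1 := by omega
    rw [this, pow_succ]
    ring
  rcases eq_or_ne k (t + 1) with hke | hke
  · rw [if_neg (by omega), if_pos (by omega), if_pos hke]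
    have h1 : Even (t + k + 1) := ⟨t + 1, by omega⟩
    have h2 : Even (t + 1 + k) := ⟨t + 1, by omega⟩
    rw [h1.neg_one_pow, h2.neg_one_pow]
    norm_num
  · rw [if_neg (by omega), if_neg (by omega), if_neg hke]
    have : t + 1 + k + 1 = (t + k + 1) + 1 := by omega
    rw [this, pow_succ]
    ring

/-- Midpoint of the two chain endpoints (`L` even). -/
private lemma mid_end_eq (L k : ℕ) (hL : Even L) :
    (Xc 0 k + Xc L k) / 2 = if k = 0 then 1 else if k ≤ L then 0 else (-1 : ℝ) ^ (k + 1) := by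
  unfold Xc
  rcases eq_or_ne k 0 with hk0 | hk0
  · simp [hk0]
  rw [if_neg hk0, if_neg hk0, if_neg hk0, if_neg (by omega)]
  rcases le_or_gt k L with hkL | hkL
  · rw [if_pos hkL, if_pos hkL]
    have h1 : (-1 : ℝ) ^ (L + k) = (-1 : ℝ) ^ k := by
      rw [pow_add, hL.neg_one_pow, one_mul]
    rw [h1]
    have : 0 + k + 1 = k + 1 := by omega
    rw [this, pow_succ]
    ring
  · rw [if_neg (by omega), if_neg (by omega)]
    have h1 : (-1 : ℝ) ^ (L + k + 1) = (-1 : ℝ) ^ (k + 1) := by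
      have : L + k + 1 = L + (k + 1) := by omega
      rw [this, pow_add, hL.neg_one_pow, one_mul]
    have : 0 + k + 1 = k + 1 := by omega
    rw [h1, this]
    ring

private lemma sum_half (n : ℕ) (U f g : ℕ → ℝ) :
    ∑ k ∈ range n, U k * ((f k + g k) / 2)
      = ((∑ k ∈ range n, U k * f k) + ∑ k ∈ range n, U k * g k) / 2 := by
  rw [← Finset.sum_add_distrib, Finset.sum_div]
  apply Finset.sum_congr rfl
  intro k _
  ring

/-- Core chain/parity contradiction. -/
private lemma chain_false (n : ℕ) (hn : 1 ≤ n) (V V₁ V₂ : ℕ → ℝ) (c c₁ c₂ : ℝ)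
    (hanti : ∀ k l : ℕ, k ≤ l → V l ≤ V k) (h0 : ∀ k, 0 ≤ V k) (hc : c ≤ 0)
    (hcov : ∀ x : ℕ → ℝ, (∀ k, x k = -1 ∨ x k = 1) →
      (∑ k ∈ range n, V k * x k) ≥ c →
      ((∑ k ∈ range n, V₁ k * x k) ≥ c₁ ∨ (∑ k ∈ range n, V₂ k * x k) ≥ c₂))
    (hno₁ : ∀ (y : ℕ → ℝ) (I : Finset ℕ), (∀ k ∈ I, k < n) → I.card ≤ 2 →
      (∀ k ∈ I, y k = -1 ∨ y k = 1) → (∀ k, k < n → k ∉ I → y k = 0) →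
      ¬((∑ k ∈ range n, V₁ k * y k) ≥ c₁))
    (hno₂ : ∀ (y : ℕ → ℝ) (I : Finset ℕ), (∀ k ∈ I, k < n) → I.card ≤ 2 →
      (∀ k ∈ I, y k = -1 ∨ y k = 1) → (∀ k, k < n → k ∉ I → y k = 0) →
      ¬((∑ k ∈ range n, V₂ k * y k) ≥ c₂))
    (hstart : (∑ k ∈ range n, V₁ k * Xc 0 k) ≥ c₁) : False := by
  set L : ℕ := 2 * ((n - 1) / 2) with hLdef
  have hLn : L ≤ n - 1 := by omega
  have hLn2 : n - 2 ≤ L := by omega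
  have hLeven : Even L := ⟨(n - 1) / 2, by omega⟩
  -- exclusion lemmas
  have excl₁ : ∀ t : ℕ, t + 1 < n → (∑ k ∈ range n, V₁ k * Xc t k) ≥ c₁ →
      ¬((∑ k ∈ range n, V₁ k * Xc (t + 1) k) ≥ c₁) := by
    intro t ht hA hB
    apply hno₁ (fun k => (Xc t k + Xc (t + 1) k) / 2) ({0, t + 1} : Finset ℕ)
    · intro k hk
      rcases Finset.mem_insert.mp hk with h | h
      · omega
      · rw [Finset.mem_singleton] at h; omega
    · exact le_trans (Finset.card_insert_le _ _) (by simp)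
    · intro k hk
      rcases Finset.mem_insert.mp hk with h | h
      · right; rw [mid_step_eq, if_pos h]
      · rw [Finset.mem_singleton] at h
        right; rw [mid_step_eq]
        rcases eq_or_ne k 0 with h' | h'
        · rw [if_pos h']
        · rw [if_neg h', if_pos h]
    · intro k _ hk
      rw [mid_step_eq, if_neg (by simp at hk; tauto), if_neg (by simp at hk; tauto)]
    · rw [sum_half]
      linarith
  have excl₂ : ∀ t : ℕ, t + 1 < n → (∑ k ∈ range n, V₂ k * Xc t k) ≥ c₂ →
      ¬((∑ k ∈ range n, V₂ k * Xc (t + 1) k) ≥ c₂) := by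
    intro t ht hA hB
    apply hno₂ (fun k => (Xc t k + Xc (t + 1) k) / 2) ({0, t + 1} : Finset ℕ)
    · intro k hk
      rcases Finset.mem_insert.mp hk with h | h
      · omega
      · rw [Finset.mem_singleton] at h; omega
    · exact le_trans (Finset.card_insert_le _ _) (by simp)
    · intro k hk
      rcases Finset.mem_insert.mp hk with h | h
      · right; rw [mid_step_eq, if_pos h]
      · rw [Finset.mem_singleton] at h
        right; rw [mid_step_eq]
        rcases eq_or_ne k 0 with h' | h'
        · rw [if_pos h']
        · rw [if_neg h', if_pos h]
    · intro k _ hk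
      rw [mid_step_eq, if_neg (by simp at hk; tauto), if_neg (by simp at hk; tauto)]
    · rw [sum_half]
      linarith
  -- the chain: at even times we are in H₁
  have chain : ∀ j : ℕ, 2 * j ≤ L → (∑ k ∈ range n, V₁ k * Xc (2 * j) k) ≥ c₁ := by
    intro j
    induction j with
    | zero => intro _; simpa using hstart
    | succ j ih =>
      intro hj
      have hj' : 2 * j ≤ L := by omega
      have h1 := ih hj'
      have hne : ¬((∑ k ∈ range n, V₁ k * Xc (2 * j + 1) k) ≥ c₁) :=
        excl₁ (2 * j) (by omega) h1
      have hmem : (∑ k ∈ range n, V k * Xc (2 * j + 1) k) ≥ c :=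
        memT V hanti h0 c hc n (2 * j + 1) hn (by omega)
      have h2 : (∑ k ∈ range n, V₂ k * Xc (2 * j + 1) k) ≥ c₂ := by
        rcases hcov (Xc (2 * j + 1)) (fun k => Xc_pm _ k) hmem with h | h
        · exact absurd h hne
        · exact h
      have hne2 : ¬((∑ k ∈ range n, V₂ k * Xc (2 * j + 2) k) ≥ c₂) :=
        excl₂ (2 * j + 1) (by omega) h2
      have hmem2 : (∑ k ∈ range n, V k * Xc (2 * j + 2) k) ≥ c :=
        memT V hanti h0 c hc n (2 * j + 2) hn (by omega)
      have h3 : (∑ k ∈ range n, V₁ k * Xc (2 * j + 2) k) ≥ c₁ := by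
        rcases hcov (Xc (2 * j + 2)) (fun k => Xc_pm _ k) hmem2 with h | h
        · exact h
        · exact absurd h hne2
      have : 2 * (j + 1) = 2 * j + 2 := by omega
      rw [this]
      exact h3
  have hLend : (∑ k ∈ range n, V₁ k * Xc L k) ≥ c₁ := chain ((n - 1) / 2) (by omega)
  -- endpoint midpoint gives a small witness in H₁
  apply hno₁ (fun k => (Xc 0 k + Xc L k) / 2) (insert 0 (Ico (L + 1) n))
  · intro k hk
    rcases Finset.mem_insert.mp hk with h | h
    · omega
    · exact (Finset.mem_Ico.mp h).2
  · calc (insert 0 (Ico (L + 1) n)).card ≤ (Ico (L + 1) n).card + 1 :=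
          Finset.card_insert_le _ _
      _ ≤ 2 := by rw [Nat.card_Ico]; omega
  · intro k hk
    rcases Finset.mem_insert.mp hk with h | h
    · right; rw [mid_end_eq L k hLeven, if_pos h]
    · obtain ⟨h1, h2⟩ := Finset.mem_Ico.mp h
      rw [mid_end_eq L k hLeven, if_neg (by omega), if_neg (by omega)]
      rcases neg_one_pow_eq_or ℝ (k + 1) with h | h <;> [right; left] <;> exact h
  · intro k hk hknot
    rw [mid_end_eq L k hLeven]
    have h1 : k ≠ 0 := by
      intro h
      subst h
      exact hknot (Finset.mem_insert_self _ _)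
    have h2 : k ≤ L := by
      by_contra h
      exact hknot (Finset.mem_insert.mpr (Or.inr (Finset.mem_Ico.mpr ⟨by omega, hk⟩)))
    rw [if_neg h1, if_pos h2]
  · rw [sum_half]
    linarith

end GoodHalfspaceAux

open Finset in
/-- Let `H = {x : w·x ≥ c}`, `H₁ = {x : w₁·x ≥ c₁}`,
`H₂ = {x : w₂·x ≥ c₂}` be halfspaces in `ℝⁿ` such that `0ⁿ ∈ H` and
`H ∩ {-1,1}ⁿ ⊆ H₁ ∪ H₂`. Then at least one of `H₁`, `H₂` contains a point
`y ∈ {-1,0,1}ⁿ` having at most two coordinates in `{-1,1}`. -/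
theorem good_halfspace_cover_pm1 {n : ℕ} (w w₁ w₂ : Fin n → ℝ) (c c₁ c₂ : ℝ)
    (h0 : (∑ i, w i * (0 : ℝ)) ≥ c)
    (hcov : ∀ x : Fin n → ℝ, (∀ i, x i = -1 ∨ x i = 1) →
      (∑ i, w i * x i) ≥ c →
      ((∑ i, w₁ i * x i) ≥ c₁ ∨ (∑ i, w₂ i * x i) ≥ c₂)) :
    ∃ (y : Fin n → ℝ) (I : Finset (Fin n)), I.card ≤ 2 ∧
      (∀ i ∈ I, y i = -1 ∨ y i = 1) ∧ (∀ i ∉ I, y i = 0) ∧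
      ((∑ i, w₁ i * y i) ≥ c₁ ∨ (∑ i, w₂ i * y i) ≥ c₂) := by
  by_contra hcon
  push_neg at hcon
  have hc : c ≤ 0 := by simpa using h0
  -- trivial case n = 0
  rcases Nat.eq_zero_or_pos n with hn | hn
  · subst hn
    obtain ⟨hA, hB⟩ := hcon (fun _ => 0) ∅ (by simp) (by simp) (by simp)
    rcases hcov (fun _ => 1) (fun i => i.elim0) (by simpa using hc) with h | h
    · simp at h hA; linarith
    · simp at h hB; linarith
  -- sorting permutation and signs
  set σp : Equiv.Perm (Fin n) := Tuple.sort (fun i => -|w i|) with hσp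
  set sg : Fin n → ℝ := fun j => if w j < 0 then -1 else 1 with hsg
  have hsgpm : ∀ j, sg j = -1 ∨ sg j = 1 := by
    intro j; by_cases h : w j < 0 <;> simp [hsg, h]
  have hsgabs : ∀ j, sg j * w j = |w j| := by
    intro j
    by_cases h : w j < 0
    · simp [hsg, h, abs_of_neg h]
    · simp [hsg, h, abs_of_nonneg (le_of_not_gt h)]
  have pmmul : ∀ a b : ℝ, (a = -1 ∨ a = 1) → (b = -1 ∨ b = 1) → (a * b = -1 ∨ a * b = 1) := by
    intro a b ha hb
    rcases ha with h | h <;> rcases hb with h' | h' <;> subst h <;> subst h' <;> norm_num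
  -- transported weights
  set V : ℕ → ℝ := fun k => if h : k < n then sg (σp ⟨k, h⟩) * w (σp ⟨k, h⟩) else 0 with hV
  set V₁ : ℕ → ℝ := fun k => if h : k < n then sg (σp ⟨k, h⟩) * w₁ (σp ⟨k, h⟩) else 0 with hV₁
  set V₂ : ℕ → ℝ := fun k => if h : k < n then sg (σp ⟨k, h⟩) * w₂ (σp ⟨k, h⟩) else 0 with hV₂
  -- generic sum transport
  have trans : ∀ (u : Fin n → ℝ) (x : ℕ → ℝ),
      (∑ j, u j * (sg j * x ((σp.symm j) : ℕ)))
        = ∑ k ∈ range n, (if h : k < n then sg (σp ⟨k, h⟩) * u (σp ⟨k, h⟩) else 0) * x k := by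
    intro u x
    rw [← Equiv.sum_comp σp (fun j => u j * (sg j * x ((σp.symm j) : ℕ)))]
    rw [← Fin.sum_univ_eq_sum_range
      (fun k => (if h : k < n then sg (σp ⟨k, h⟩) * u (σp ⟨k, h⟩) else 0) * x k) n]
    apply Finset.sum_congr rfl
    intro i _
    simp only [Equiv.symm_apply_apply, Fin.is_lt, dif_pos, Fin.eta]
    ring
  have hV0 : ∀ k, 0 ≤ V k := by
    intro k
    simp only [hV]
    by_cases h : k < n
    · rw [dif_pos h, hsgabs]; exact abs_nonneg _
    · rw [dif_neg h]
  have hVanti : ∀ k l : ℕ, k ≤ l → V l ≤ V k := by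
    intro k l hkl
    simp only [hV]
    by_cases hl : l < n
    · have hk : k < n := by omega
      rw [dif_pos hl, dif_pos hk, hsgabs, hsgabs]
      have := Tuple.monotone_sort (fun i => -|w i|)
        (show (⟨k, hk⟩ : Fin n) ≤ ⟨l, hl⟩ from hkl)
      simp only [Function.comp_apply] at this
      rw [← hσp] at this
      linarith
    · by_cases hk : k < n
      · rw [dif_pos hk, dif_neg hl, hsgabs]; exact abs_nonneg _
      · rw [dif_neg hk, dif_neg hl]
  -- transported cover hypothesis
  have hcov' : ∀ x : ℕ → ℝ, (∀ k, x k = -1 ∨ x k = 1) →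
      (∑ k ∈ range n, V k * x k) ≥ c →
      ((∑ k ∈ range n, V₁ k * x k) ≥ c₁ ∨ (∑ k ∈ range n, V₂ k * x k) ≥ c₂) := by
    intro x hx hxc
    have h := hcov (fun j => sg j * x ((σp.symm j) : ℕ))
      (fun j => pmmul _ _ (hsgpm j) (hx _))
      (by rw [show (∑ j, w j * (sg j * x ((σp.symm j) : ℕ))) = _ from trans w x]; exact hxc)
    rw [show (∑ j, w₁ j * (sg j * x ((σp.symm j) : ℕ))) = _ from trans w₁ x] at h
    rw [show (∑ j, w₂ j * (sg j * x ((σp.symm j) : ℕ))) = _ from trans w₂ x] at h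
    exact h
  -- transported no-witness hypothesis
  have hno' : ∀ (y : ℕ → ℝ) (I : Finset ℕ), (∀ k ∈ I, k < n) → I.card ≤ 2 →
      (∀ k ∈ I, y k = -1 ∨ y k = 1) → (∀ k, k < n → k ∉ I → y k = 0) →
      ¬((∑ k ∈ range n, V₁ k * y k) ≥ c₁) ∧ ¬((∑ k ∈ range n, V₂ k * y k) ≥ c₂) := by
    intro y I hIn hIc hIv hIz
    set If : Finset (Fin n) := (I.attachFin hIn).map σp.toEmbedding with hIf
    have hmem : ∀ j : Fin n, j ∈ If ↔ ((σp.symm j) : ℕ) ∈ I := by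
      intro j
      rw [hIf, Finset.mem_map_equiv, Finset.mem_attachFin]
    have hcard : If.card ≤ 2 := by
      rw [hIf, Finset.card_map, Finset.card_attachFin]; exact hIc
    obtain ⟨hA, hB⟩ := hcon (fun j => sg j * y ((σp.symm j) : ℕ)) If hcard
      (by
        intro j hj
        exact pmmul _ _ (hsgpm j) (hIv _ ((hmem j).mp hj)))
      (by
        intro j hj
        have : y ((σp.symm j) : ℕ) = 0 :=
          hIz _ (σp.symm j).is_lt (fun hmem' => hj ((hmem j).mpr hmem'))
        simp [this])
    constructor
    · intro hge
      rw [show (∑ j, w₁ j * (sg j * y ((σp.symm j) : ℕ))) = _ from trans w₁ y] at hA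
      linarith
    · intro hge
      rw [show (∑ j, w₂ j * (sg j * y ((σp.symm j) : ℕ))) = _ from trans w₂ y] at hB
      linarith
  -- start the chain
  have hmem0 : (∑ k ∈ range n, V k * Xc 0 k) ≥ c :=
    memT V hVanti hV0 c hc n 0 hn (by omega)
  rcases hcov' (Xc 0) (fun k => Xc_pm 0 k) hmem0 with hst | hst
  · exact chain_false n hn V V₁ V₂ c c₁ c₂ hVanti hV0 hc hcov'
      (fun y I a b d e => (hno' y I a b d e).1)
      (fun y I a b d e => (hno' y I a b d e).2) hst
  · exact chain_false n hn V V₂ V₁ c c₂ c₁ hVanti hV0 hc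
      (fun x hx hxc => (hcov' x hx hxc).symm)
      (fun y I a b d e => (hno' y I a b d e).2)
      (fun y I a b d e => (hno' y I a b d e).1) hst
end

section
/- Let n ≥ 2 and let w₁, w₂ ∈ ℝⁿ be nonzero vectors. Then there exists a vector v ∈ [−1,1]ⁿ with v·w₁ = 0 and v·w₂ = 0 such that at least n−2 coordinates of v lie in {−1,1}. -/
/-!
Let `L v = (v ⬝ᵥ w₁, v ⬝ᵥ w₂)` and take an extreme point `v` of the compact set
`[-1,1]ⁿ ∩ ker L` (Krein–Milman). If more than two coordinates of `v` lay strictly inside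
`(-1,1)`, the restriction of `L` to vectors supported on those coordinates would have a nonzero
kernel element `d`, and `v ± t d` would stay in the set for small `t`, exhibiting `v` as a
midpoint. So at most two coordinates of `v` are free, and all others are `±1`.
-/

open Set Filter Topology Module

theorem eq_zero_of_add_mem_of_sub_mem_of_mem_extremePoints {E : Type*} [AddCommGroup E]
    [Module ℝ E] {A : Set E} {x y : E} (hx : x ∈ extremePoints ℝ A) (hadd : x + y ∈ A)
    (hsub : x - y ∈ A) : y = 0 := by
  have hseg : x ∈ openSegment ℝ (x + y) (x - y) :=
    ⟨1 / 2, 1 / 2, by norm_num, by norm_num, by norm_num, by module⟩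
  simpa using hx.2 hadd hsub hseg

section Box

variable {ι : Type*} [Fintype ι]

theorem eventually_add_smul_mem_Icc {a b v d : ι → ℝ} (hv : v ∈ Icc a b)
    (hd : ∀ i, d i ≠ 0 → v i ∈ Ioo (a i) (b i)) :
    ∀ᶠ t in 𝓝 (0 : ℝ), v + t • d ∈ Icc a b := by
  simp only [mem_Icc, Pi.le_def, ← forall_and, eventually_all]
  intro i
  by_cases hdi : d i = 0
  · simp [hdi, hv.1 i, hv.2 i]
  have hcont : Tendsto (fun t : ℝ => v i + t * d i) (𝓝 0) (𝓝 (v i)) := by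
    simpa using ((continuous_mul_const (d i)).const_add (v i)).tendsto 0
  filter_upwards [hcont (Ioo_mem_nhds (hd i hdi).1 (hd i hdi).2)] with t ht
  exact ⟨ht.1.le, ht.2.le⟩

theorem card_filter_mem_Ioo_le_finrank_of_mem_extremePoints {E : Type*} [AddCommGroup E]
    [Module ℝ E] [FiniteDimensional ℝ E] {a b : ι → ℝ} (L : (ι → ℝ) →ₗ[ℝ] E) {v : ι → ℝ}
    (hv : v ∈ extremePoints ℝ (Icc a b ∩ LinearMap.ker L)) :
    Finset.card {i | v i ∈ Ioo (a i) (b i)} ≤ finrank ℝ E := by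
  classical
  set F : Finset ι := {i | v i ∈ Ioo (a i) (b i)}
  by_contra! hF
  let extend : (F → ℝ) →ₗ[ℝ] ι → ℝ := Function.ExtendByZero.linearMap ℝ Subtype.val
  obtain ⟨g, hgker, hg⟩ := Submodule.ne_bot_iff _ |>.1 <|
    LinearMap.ker_ne_bot_of_finrank_lt (f := L ∘ₗ extend) (by simpa using hF)
  set d := extend g
  have hd_supp : ∀ i, d i ≠ 0 → v i ∈ Ioo (a i) (b i) := by
    intro i hi
    by_contra hiF
    refine hi (Function.extend_apply' _ _ _ ?_)
    rintro ⟨j, rfl⟩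
    exact hiF (Finset.mem_filter.1 j.2).2
  have hd_ne : d ≠ 0 := by
    obtain ⟨j, hj⟩ := Function.ne_iff.1 hg
    exact Function.ne_iff.2 ⟨j, by simpa [d, extend, Subtype.val_injective.extend_apply] using hj⟩
  have hker (t : ℝ) : v + t • d ∈ LinearMap.ker L := by
    simp [LinearMap.mem_ker.1 hv.1.2, show L d = 0 from hgker]
  have hbox : ∀ᶠ t in 𝓝 (0 : ℝ), v + t • d ∈ Icc a b ∧ v + (-t) • d ∈ Icc a b :=
    (eventually_add_smul_mem_Icc hv.1.1 hd_supp).and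
      ((continuous_neg.tendsto' (0 : ℝ) 0 neg_zero).eventually
        (eventually_add_smul_mem_Icc hv.1.1 hd_supp))
  obtain ⟨t, ⟨hplus, hminus⟩, ht⟩ :=
    ((hbox.filter_mono nhdsWithin_le_nhds).and (self_mem_nhdsWithin (s := {0}ᶜ))).exists
  have hsub : v - t • d = v + (-t) • d := by rw [neg_smul, sub_eq_add_neg]
  have htd : t • d = 0 := eq_zero_of_add_mem_of_sub_mem_of_mem_extremePoints hv
    ⟨hplus, hker t⟩ (hsub ▸ ⟨hminus, hker (-t)⟩)
  exact hd_ne ((smul_eq_zero.1 htd).resolve_left ht)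

end Box

theorem orthogonal_vector_on_two_face_general {n : ℕ}
    (w₁ w₂ : Fin n → ℝ) :
    ∃ v : Fin n → ℝ, (∀ i, -1 ≤ v i ∧ v i ≤ 1) ∧
      (∑ i, v i * w₁ i) = 0 ∧ (∑ i, v i * w₂ i) = 0 ∧
      ∃ I : Finset (Fin n), n - 2 ≤ I.card ∧ ∀ i ∈ I, v i = -1 ∨ v i = 1 := by
  classical
  let L : (Fin n → ℝ) →ₗ[ℝ] Fin 2 → ℝ := Matrix.mulVecLin (Matrix.of ![w₁, w₂])
  have hL (v : Fin n → ℝ) :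
      v ∈ LinearMap.ker L ↔ (∑ i, v i * w₁ i) = 0 ∧ (∑ i, v i * w₂ i) = 0 := by
    simp [L, funext_iff, Fin.forall_fin_two, dotProduct, mul_comm]
  have hS : IsCompact (Icc (-1) 1 ∩ LinearMap.ker L : Set (Fin n → ℝ)) :=
    isCompact_Icc.inter_right (LinearMap.ker L).closed_of_finiteDimensional
  obtain ⟨v, hv⟩ := hS.extremePoints_nonempty ⟨0, by simp⟩
  have hfree := card_filter_mem_Ioo_le_finrank_of_mem_extremePoints L hv
  simp only [Pi.neg_apply, Pi.one_apply, finrank_fin_fun] at hfree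
  obtain ⟨⟨hcube, hker⟩, -⟩ := hv
  refine ⟨v, fun i => ⟨hcube.1 i, hcube.2 i⟩, ((hL v).1 hker).1, ((hL v).1 hker).2,
    ({i | v i ∈ Ioo (-1) 1} : Finset (Fin n))ᶜ, ?_, fun i hi => ?_⟩
  · rw [Finset.card_compl, Fintype.card_fin]
    omega
  · have : v i ∈ Icc (-1) 1 \ Ioo (-1) 1 := ⟨⟨hcube.1 i, hcube.2 i⟩, by simpa using hi⟩
    simpa [Icc_sdiff_Ioo_same] using this

/-- Let `n ≥ 2` and let `w₁, w₂ ∈ ℝⁿ` be nonzero vectors. Then there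
is a vector `v ∈ [-1,1]ⁿ` orthogonal to both `w₁` and `w₂` such that at least `n - 2`
of its coordinates lie in `{-1,1}` (i.e. `v` lies on a 2-face of the cube). -/
theorem orthogonal_vector_on_two_face {n : ℕ} (hn : 2 ≤ n)
    (w₁ w₂ : Fin n → ℝ) (h₁ : w₁ ≠ 0) (h₂ : w₂ ≠ 0) :
    ∃ v : Fin n → ℝ, (∀ i, -1 ≤ v i ∧ v i ≤ 1) ∧
      (∑ i, v i * w₁ i) = 0 ∧ (∑ i, v i * w₂ i) = 0 ∧
      ∃ I : Finset (Fin n), n - 2 ≤ I.card ∧ ∀ i ∈ I, v i = -1 ∨ v i = 1 :=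
  orthogonal_vector_on_two_face_general w₁ w₂
end

section
/- Let F be a system of 𝔽₂-linear equations over Boolean variables x₁,…,x_n that is an (r,s)-boundary expander with s > 1, let F' ⊆ F be a subset of the equations with |F'| ≤ r, and let H ⊆ ℝⁿ be a good halfspace. Then there is a partial assignment ρ whose set of fixed coordinates is exactly the set of variables occurring in the equations of F', such that ρ satisfies every equation of F' and the point of ℝⁿ that equals ρ on the fixed coordinates and 1/2 on all other coordinates lies in H. -/
/-- The XOR of the values of `x` over the index set `S`. -/
def xorOver {n : ℕ} (S : Finset (Fin n)) (x : Fin n → Bool) : Bool :=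
  decide ((S.filter fun j => x j = true).card % 2 = 1)

/-- The boundary of a subset `W` of a system of `𝔽₂`-linear equations: the variables
occurring in exactly one equation of `W`. -/
def xorBoundary {n : ℕ} (W : Finset (Finset (Fin n) × Bool)) : Finset (Fin n) :=
  Finset.univ.filter fun j : Fin n => (W.filter fun E => j ∈ E.1).card = 1

lemma xorOver_congr {n : ℕ} {S : Finset (Fin n)} {x y : Fin n → Bool}
    (h : ∀ i ∈ S, x i = y i) : xorOver S x = xorOver S y := by
  unfold xorOver
  have : S.filter (fun j => x j = true) = S.filter (fun j => y j = true) :=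
    Finset.filter_congr (by intro i hi; simp [h i hi])
  rw [this]

lemma xorOver_update {n : ℕ} {S : Finset (Fin n)} {x : Fin n → Bool} {j : Fin n}
    (hj : j ∈ S) :
    xorOver S (Function.update x j (!x j)) = !(xorOver S x) := by
  classical
  unfold xorOver
  set y := Function.update x j (!x j) with hy
  set A := S.filter fun i => x i = true with hA
  set B := S.filter fun i => y i = true with hB
  have hyj : y j = !x j := by simp [hy]
  have hyne : ∀ i, i ≠ j → y i = x i := by
    intro i hi; simp [hy, Function.update_of_ne hi]
  have hcards : B.card = A.card + 1 ∨ A.card = B.card + 1 := by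
    cases hxj : x j with
    | true =>
      right
      have hjA : j ∈ A := by simp [hA, hj, hxj]
      have : B = A.erase j := by
        ext i
        by_cases hij : i = j
        · subst hij; simp [hB, hyj, hxj]
        · simp [hB, hA, hyne i hij, hij]
      have h1 : 1 ≤ A.card := Finset.card_pos.mpr ⟨j, hjA⟩
      rw [this, Finset.card_erase_of_mem hjA]
      omega
    | false =>
      left
      have hjA : j ∉ A := by simp [hA, hxj]
      have : B = insert j A := by
        ext i
        by_cases hij : i = j
        · subst hij; simp [hB, hyj, hxj, hj]
        · simp [hB, hA, hyne i hij, hij]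
      rw [this, Finset.card_insert_of_notMem hjA]
  rw [← decide_not]
  exact decide_eq_decide.mpr (by omega)


/-- Let `F` be a system of `𝔽₂`-linear equations over Boolean
variables `x₁, …, x_n` that is an `(r, s)`-boundary expander with `s > 1`, let
`F' ⊆ F` with `|F'| ≤ r`, and let `H = {x : w·x ≥ c}` be a good halfspace (one
containing the all-`1/2` point). Then there is a partial assignment, fixing exactly
the variables occurring in the equations of `F'`, that satisfies every equation of
`F'` and such that the point equal to it on the fixed variables and to `1/2` on all
other variables lies in `H`. -/
theorem boundary_cleanup {n : ℕ} (r : ℕ) (s : ℝ) (hs : 1 < s)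
    (F : Finset (Finset (Fin n) × Bool))
    (hexp : ∀ W ⊆ F, W.card ≤ r → s * (W.card : ℝ) ≤ ((xorBoundary W).card : ℝ))
    (F' : Finset (Finset (Fin n) × Bool)) (hF' : F' ⊆ F) (hcard : F'.card ≤ r)
    (w : Fin n → ℝ) (c : ℝ)
    (hgood : (∑ i, w i * (1 / 2 : ℝ)) ≥ c) :
    ∃ σ : Fin n → Bool,
      (∀ E ∈ F', xorOver E.1 σ = E.2) ∧
      (∑ i, w i * (if i ∈ F'.biUnion Prod.fst then (if σ i then (1 : ℝ) else 0)
        else 1 / 2)) ≥ c := by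
  classical
  induction F' using Finset.strongInduction with
  | _ F' ih =>
  by_cases hne : F' = ∅
  · subst hne
    exact ⟨fun _ => false, by simp, by simpa using hgood⟩
  have hne' : F'.Nonempty := Finset.nonempty_iff_ne_empty.mpr hne
  -- pigeonhole: some equation has ≥ 2 boundary variables
  have hBlt : F'.card < (xorBoundary F').card := by
    have h1 := hexp F' hF' hcard
    have h2 : (0:ℝ) < (F'.card : ℝ) := by
      exact_mod_cast Finset.card_pos.mpr hne'
    have : (F'.card : ℝ) < ((xorBoundary F').card : ℝ) := by nlinarith
    exact_mod_cast this
  have hsub : xorBoundary F' ⊆ F'.biUnion (fun E => E.1 ∩ xorBoundary F') := by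
    intro j hj
    have hj' : (F'.filter fun E => j ∈ E.1).card = 1 := by
      simpa [xorBoundary] using hj
    obtain ⟨E, hE⟩ := Finset.card_eq_one.mp hj'
    have hEmem : E ∈ F'.filter fun E => j ∈ E.1 := by rw [hE]; exact Finset.mem_singleton_self E
    rw [Finset.mem_filter] at hEmem
    exact Finset.mem_biUnion.mpr ⟨E, hEmem.1, Finset.mem_inter.mpr ⟨hEmem.2, hj⟩⟩
  have hEx : ∃ E ∈ F', 2 ≤ (E.1 ∩ xorBoundary F').card := by
    by_contra hcon
    push_neg at hcon
    have h1 : (xorBoundary F').card ≤ ∑ E ∈ F', (E.1 ∩ xorBoundary F').card :=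
      le_trans (Finset.card_le_card hsub) (Finset.card_biUnion_le)
    have h2 : ∑ E ∈ F', (E.1 ∩ xorBoundary F').card ≤ ∑ _E ∈ F', 1 :=
      Finset.sum_le_sum (fun E hE => by have := hcon E hE; omega)
    simp only [Finset.sum_const, smul_eq_mul, mul_one] at h2
    omega
  obtain ⟨E, hEF', hE2⟩ := hEx
  set F'' := F'.erase E with hF''
  -- the big-boundary variables of E are free of the rest
  have hTsub : E.1 ∩ xorBoundary F' ⊆ E.1 \ F''.biUnion Prod.fst := by
    intro j hj
    obtain ⟨hj1, hj2⟩ := Finset.mem_inter.mp hj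
    refine Finset.mem_sdiff.mpr ⟨hj1, ?_⟩
    intro hmem
    obtain ⟨E', hE', hjE'⟩ := Finset.mem_biUnion.mp hmem
    have hE'ne : E' ≠ E := Finset.ne_of_mem_erase hE'
    have hE'F' : E' ∈ F' := Finset.mem_of_mem_erase hE'
    have hj2' : (F'.filter fun E => j ∈ E.1).card = 1 := by
      simpa [xorBoundary] using hj2
    have : 1 < (F'.filter fun E => j ∈ E.1).card := by
      apply Finset.one_lt_card.mpr
      exact ⟨E, Finset.mem_filter.mpr ⟨hEF', hj1⟩, E',
        Finset.mem_filter.mpr ⟨hE'F', hjE'⟩, fun h => hE'ne h.symm⟩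
    omega
  set T := E.1 \ F''.biUnion Prod.fst with hT
  have hT2 : 2 ≤ T.card := le_trans hE2 (Finset.card_le_card hTsub)
  -- induction hypothesis
  have hss : F'' ⊂ F' := Finset.erase_ssubset hEF'
  obtain ⟨σ, hσ1, hσ2⟩ := ih F'' hss (le_trans (Finset.erase_subset _ _) hF')
    (le_trans (Finset.card_le_card (Finset.erase_subset _ _)) hcard)
  -- build the new assignment
  set σ₁ : Fin n → Bool := fun i => if i ∈ T then decide (0 ≤ w i) else σ i with hσ₁
  have hTne : T.Nonempty := Finset.card_pos.mp (by omega)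
  obtain ⟨j, hjT, hjmin⟩ := Finset.exists_min_image T (fun i => |w i|) hTne
  set σ₂ : Fin n → Bool :=
    if xorOver E.1 σ₁ = E.2 then σ₁ else Function.update σ₁ j (!σ₁ j) with hσ₂
  have hjE : j ∈ E.1 := (Finset.mem_sdiff.mp hjT).1
  have hTV'' : ∀ i ∈ T, i ∉ F''.biUnion Prod.fst := fun i hi =>
    (Finset.mem_sdiff.mp hi).2
  have hσ₂V : ∀ i, i ∉ T → σ₂ i = σ i := by
    intro i hi
    have h1 : σ₁ i = σ i := by simp [hσ₁, hi]
    rw [hσ₂]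
    split
    · exact h1
    · rw [Function.update_of_ne (by rintro rfl; exact hi hjT)]
      exact h1
  refine ⟨σ₂, ?_, ?_⟩
  · -- equations satisfied
    intro E' hE'
    rcases Finset.mem_insert.mp (by rw [Finset.insert_erase hEF'] at *; exact hE') with h | h
    · rw [h]
      rw [hσ₂]
      split
      · assumption
      · rename_i hne2
        rw [xorOver_update hjE]
        cases h1 : xorOver E.1 σ₁ <;> cases h2 : E.2 <;> simp_all
    · have hE'T : ∀ i ∈ E'.1, i ∉ T := by
        intro i hi hiT
        exact hTV'' i hiT (Finset.mem_biUnion.mpr ⟨E', h, hi⟩)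
      rw [xorOver_congr (x := σ₂) (y := σ) (fun i hi => hσ₂V i (hE'T i hi))]
      exact hσ1 E' h
  · -- the halfspace condition
    have hV : F'.biUnion Prod.fst = E.1 ∪ F''.biUnion Prod.fst := by
      conv_lhs => rw [← Finset.insert_erase hEF']
      rw [Finset.biUnion_insert]
    have key : ∀ i, w i * (if i ∈ F'.biUnion Prod.fst then (if σ₂ i then (1:ℝ) else 0) else 1/2)
        = w i * (if i ∈ F''.biUnion Prod.fst then (if σ i then (1:ℝ) else 0) else 1/2)
          + (if i ∈ T then w i * ((if σ₂ i then (1:ℝ) else 0) - 1/2) else 0) := by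
      intro i
      by_cases hiT : i ∈ T
      · have hiE : i ∈ E.1 := (Finset.mem_sdiff.mp hiT).1
        have hiV'' : i ∉ F''.biUnion Prod.fst := hTV'' i hiT
        have hiV : i ∈ F'.biUnion Prod.fst := by
          rw [hV]; exact Finset.mem_union_left _ hiE
        simp only [if_pos hiT, if_pos hiV, if_neg hiV'']
        ring
      · have hσi : σ₂ i = σ i := hσ₂V i hiT
        by_cases hiV'' : i ∈ F''.biUnion Prod.fst
        · have hiV : i ∈ F'.biUnion Prod.fst := by
            rw [hV]; exact Finset.mem_union_right _ hiV''
          simp only [if_pos hiV, if_pos hiV'', if_neg hiT, hσi]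
          ring
        · have hiE : i ∉ E.1 := by
            intro hiE
            exact hiT (Finset.mem_sdiff.mpr ⟨hiE, hiV''⟩)
          have hiV : i ∉ F'.biUnion Prod.fst := by
            rw [hV]
            intro hmem
            rcases Finset.mem_union.mp hmem with h | h
            · exact hiE h
            · exact hiV'' h
          simp only [if_neg hiV, if_neg hiV'', if_neg hiT]
          ring
    have hsum : (∑ i, w i * (if i ∈ F'.biUnion Prod.fst then (if σ₂ i then (1:ℝ) else 0) else 1/2))
        = (∑ i, w i * (if i ∈ F''.biUnion Prod.fst then (if σ i then (1:ℝ) else 0) else 1/2))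
          + ∑ i ∈ T, w i * ((if σ₂ i then (1:ℝ) else 0) - 1/2) := by
      calc (∑ i, w i * (if i ∈ F'.biUnion Prod.fst then (if σ₂ i then (1:ℝ) else 0) else 1/2))
          = ∑ i, (w i * (if i ∈ F''.biUnion Prod.fst then (if σ i then (1:ℝ) else 0) else 1/2)
            + (if i ∈ T then w i * ((if σ₂ i then (1:ℝ) else 0) - 1/2) else 0)) :=
            Finset.sum_congr rfl (fun i _ => key i)
        _ = _ := by
            rw [Finset.sum_add_distrib, Finset.sum_ite_mem, Finset.univ_inter]
    have habs : ∀ i, σ₂ i = decide (0 ≤ w i) →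
        w i * ((if σ₂ i then (1:ℝ) else 0) - 1/2) = |w i| / 2 := by
      intro i hi
      rw [hi]
      by_cases hw : 0 ≤ w i
      · rw [abs_of_nonneg hw]; simp [hw]; ring
      · rw [abs_of_neg (lt_of_not_ge hw)]; simp [hw]; ring
    have hσ₁T : ∀ i ∈ T, σ₁ i = decide (0 ≤ w i) := by
      intro i hi; simp [hσ₁, hi]
    have hTge : 0 ≤ ∑ i ∈ T, w i * ((if σ₂ i then (1:ℝ) else 0) - 1/2) := by
      by_cases hflip : xorOver E.1 σ₁ = E.2
      · apply Finset.sum_nonneg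
        intro i hi
        have : σ₂ i = decide (0 ≤ w i) := by
          rw [hσ₂, if_pos hflip]; exact hσ₁T i hi
        rw [habs i this]
        positivity
      · have hσ₂j : σ₂ j = !decide (0 ≤ w j) := by
          rw [hσ₂, if_neg hflip, Function.update_self, hσ₁T j hjT]
        have hσ₂i : ∀ i ∈ T, i ≠ j → σ₂ i = decide (0 ≤ w i) := by
          intro i hi hij
          rw [hσ₂, if_neg hflip, Function.update_of_ne hij]
          exact hσ₁T i hi
        have hjterm : w j * ((if σ₂ j then (1:ℝ) else 0) - 1/2) = -(|w j| / 2) := by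
          rw [hσ₂j]
          by_cases hw : 0 ≤ w j
          · rw [abs_of_nonneg hw]; simp [hw]; ring
          · rw [abs_of_neg (lt_of_not_ge hw)]; simp [hw]; ring
        rw [← Finset.add_sum_erase T _ hjT, hjterm]
        have herase : ∑ i ∈ T.erase j, w i * ((if σ₂ i then (1:ℝ) else 0) - 1/2)
            = ∑ i ∈ T.erase j, |w i| / 2 := by
          apply Finset.sum_congr rfl
          intro i hi
          exact habs i (hσ₂i i (Finset.mem_of_mem_erase hi) (Finset.ne_of_mem_erase hi))
        have hj'ex : (T.erase j).Nonempty := by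
          apply Finset.card_pos.mp
          rw [Finset.card_erase_of_mem hjT]
          omega
        obtain ⟨j', hj'⟩ := hj'ex
        have h1 : |w j'| / 2 ≤ ∑ i ∈ T.erase j, |w i| / 2 :=
          Finset.single_le_sum (f := fun i => |w i| / 2) (fun i _ => by positivity) hj'
        have h2 : |w j| ≤ |w j'| := hjmin j' (Finset.mem_of_mem_erase hj')
        rw [herase]
        linarith
    rw [hsum]
    linarith
end
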